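/- arXiv:1410.1631 — 7 statements merged into one kernel-verified Lean document; each statement's English description precedes it below -/
import Mathlib

section
/- Let L > 0 and consider the Dirichlet Laplacian on the interval (0, L), whose eigenvalues are λ_m = m²π²/L² for m = 1, 2, 3, …. Then the Dirichlet partition function Z(t) = Σ_{m=1}^∞ exp(−m²π²t/L²) satisfies lim_{t→0⁺} ( Σ_{m=1}^∞ exp(−m²π²t/L²) − L/(2√(πt)) ) = −1/2; that is, Z(t) ∼ L/√(4πt) − 1/2 as t → 0⁺. -/
open Real Filter

/-- The tail theta-type sum. -/
noncomputable def thetaTail (b : ℝ) : ℝ := ∑' m : ℕ, Real.exp (-b * ((m : ℝ) + 1) ^ 2)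

lemma thetaTail_summable {b : ℝ} (hb : 0 < b) :
    Summable (fun m : ℕ => Real.exp (-b * ((m : ℝ) + 1) ^ 2)) := by
  refine Summable.of_nonneg_of_le (fun m => (Real.exp_pos _).le) (fun m => ?_)
    ((summable_geometric_of_lt_one (Real.exp_pos (-b)).le
      (Real.exp_lt_one_iff.mpr (neg_neg_iff_pos.mpr hb))).mul_left (Real.exp (-b)))
  calc Real.exp (-b * ((m : ℝ) + 1) ^ 2) ≤ Real.exp (-b * ((m : ℝ) + 1)) := by
        apply Real.exp_le_exp.mpr
        have h1 : (1 : ℝ) ≤ (m : ℝ) + 1 := by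
          have := Nat.cast_nonneg (α := ℝ) m; linarith
        have h2 : ((m:ℝ)+1) ≤ ((m:ℝ)+1)^2 := by nlinarith
        nlinarith [mul_le_mul_of_nonneg_left h2 hb.le]
    _ = Real.exp (-b) * Real.exp (-b) ^ (m : ℕ) := by
        rw [← Real.exp_nat_mul, ← Real.exp_add]; ring_nf

lemma thetaTail_nonneg (b : ℝ) : 0 ≤ thetaTail b :=
  tsum_nonneg (fun m => (Real.exp_pos _).le)

lemma thetaTail_le {b : ℝ} (hb : 0 < b) :
    thetaTail b ≤ Real.exp (-b) * (1 - Real.exp (-b))⁻¹ := by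
  have hr0 : (0:ℝ) ≤ Real.exp (-b) := (Real.exp_pos _).le
  have hr1 : Real.exp (-b) < 1 := Real.exp_lt_one_iff.mpr (neg_neg_iff_pos.mpr hb)
  have hgeom : Summable (fun m : ℕ => Real.exp (-b) * Real.exp (-b) ^ m) :=
    (summable_geometric_of_lt_one hr0 hr1).mul_left _
  have hle : ∀ m : ℕ, Real.exp (-b * ((m : ℝ) + 1) ^ 2)
      ≤ Real.exp (-b) * Real.exp (-b) ^ m := by
    intro m
    have : Real.exp (-b) * Real.exp (-b) ^ m = Real.exp (-b * ((m : ℝ) + 1)) := by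
      rw [← Real.exp_nat_mul, ← Real.exp_add]; ring_nf
    rw [this]
    apply Real.exp_le_exp.mpr
    have h1 : (1 : ℝ) ≤ (m : ℝ) + 1 := by
      have := Nat.cast_nonneg (α := ℝ) m; linarith
    have h2 : ((m:ℝ)+1) ≤ ((m:ℝ)+1)^2 := by nlinarith
    nlinarith [mul_le_mul_of_nonneg_left h2 hb.le]
  calc thetaTail b ≤ ∑' m : ℕ, Real.exp (-b) * Real.exp (-b) ^ m :=
        Summable.tsum_le_tsum hle (thetaTail_summable hb) hgeom
    _ = Real.exp (-b) * (1 - Real.exp (-b))⁻¹ := by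
        rw [tsum_mul_left, tsum_geometric_of_lt_one hr0 hr1]

/-- Full theta sum over ℤ in terms of the tail sum. -/
lemma theta_int_eq {b : ℝ} (hb : 0 < b) :
    (∑' n : ℤ, Real.exp (-b * (n : ℝ) ^ 2)) = 1 + 2 * thetaTail b := by
  have hs : Summable (fun m : ℕ => Real.exp (-b * ((m : ℝ) + 1) ^ 2)) :=
    thetaTail_summable hb
  have h1 : (fun n : ℕ => Real.exp (-b * (((n : ℤ) + 1 : ℤ) : ℝ) ^ 2))
      = fun m : ℕ => Real.exp (-b * ((m : ℝ) + 1) ^ 2) := by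
    funext n; push_cast; ring_nf
  have h2 : (fun n : ℕ => Real.exp (-b * ((-(↑n + 1) : ℤ) : ℝ) ^ 2))
      = fun m : ℕ => Real.exp (-b * ((m : ℝ) + 1) ^ 2) := by
    funext n; push_cast; ring_nf
  rw [tsum_of_add_one_of_neg_add_one (by rw [h1]; exact hs) (by rw [h2]; exact hs)]
  rw [h1, h2]
  simp [thetaTail]
  ring

lemma key_identity (L : ℝ) (hL : 0 < L) {t : ℝ} (ht : 0 < t) :
    (∑' m : ℕ, Real.exp (-(((m : ℝ) + 1) ^ 2 * Real.pi ^ 2 * t) / L ^ 2)) -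
        L / (2 * Real.sqrt (Real.pi * t))
      = (L / Real.sqrt (Real.pi * t)) * thetaTail (L ^ 2 / t) - 1 / 2 := by
  set a : ℝ := t / L ^ 2 * Real.pi with ha_def
  have ha : 0 < a := by positivity
  have hπa : 0 < Real.pi * a := by positivity
  have hfun : Real.tsum_exp_neg_mul_int_sq ha
      = Real.tsum_exp_neg_mul_int_sq ha := rfl
  have hJ := Real.tsum_exp_neg_mul_int_sq ha
  -- rewrite both ℤ-sums via theta_int_eq
  have hL2t : 0 < L ^ 2 / t := by positivity
  have hleft : (∑' n : ℤ, Real.exp (-Real.pi * a * (n : ℝ) ^ 2))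
      = 1 + 2 * thetaTail (Real.pi * a) := by
    have := theta_int_eq hπa
    simpa [neg_mul] using this
  have hπa' : Real.pi / a = L ^ 2 / t := by
    rw [ha_def]; field_simp
  have hright : (∑' n : ℤ, Real.exp (-Real.pi / a * (n : ℝ) ^ 2))
      = 1 + 2 * thetaTail (L ^ 2 / t) := by
    rw [← theta_int_eq hL2t]
    congr 1; funext n
    rw [neg_div, hπa', neg_mul]
  rw [hleft, hright] at hJ
  -- 1 / a ^ (1/2 : ℝ) = L / √(π t)
  have hsq : (1 : ℝ) / a ^ ((1:ℝ)/2) = L / Real.sqrt (Real.pi * t) := by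
    rw [← Real.sqrt_eq_rpow]
    have : a = Real.pi * t / L ^ 2 := by rw [ha_def]; ring
    rw [this, Real.sqrt_div' _ (by positivity : (0:ℝ) ≤ L ^ 2),
      Real.sqrt_sq hL.le]
    rw [one_div, inv_div]
  rw [hsq] at hJ
  -- identify the left tsum with thetaTail (π * a)
  have hsum_eq : (∑' m : ℕ, Real.exp (-(((m : ℝ) + 1) ^ 2 * Real.pi ^ 2 * t) / L ^ 2))
      = thetaTail (Real.pi * a) := by
    unfold thetaTail
    congr 1; funext m
    congr 1
    rw [ha_def]; field_simp
  rw [hsum_eq]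
  set c := L / Real.sqrt (Real.pi * t) with hc
  set X := thetaTail (Real.pi * a)
  set Y := thetaTail (L ^ 2 / t)
  have hc2 : L / (2 * Real.sqrt (Real.pi * t)) = c / 2 := by
    rw [hc]; ring
  rw [hc2]
  have hJ' : 1 + 2 * X = c + 2 * (c * Y) := by rw [hJ]; ring
  linarith

lemma remainder_tendsto (L : ℝ) (hL : 0 < L) :
    Tendsto (fun t : ℝ => (L / Real.sqrt (Real.pi * t)) * thetaTail (L ^ 2 / t))
      (nhdsWithin 0 (Set.Ioi 0)) (nhds 0) := by
  -- the comparison function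
  have hu : Tendsto (fun t : ℝ => L ^ 2 / t) (nhdsWithin 0 (Set.Ioi 0)) atTop := by
    have : Tendsto (fun t : ℝ => L ^ 2 * t⁻¹) (nhdsWithin 0 (Set.Ioi 0)) atTop :=
      Tendsto.const_mul_atTop (by positivity) tendsto_inv_nhdsGT_zero
    simpa [div_eq_mul_inv] using this
  -- g v = (1/√π) * √v * exp(-v) * (1 - exp(-v))⁻¹ tends to 0 at atTop
  have hg1 : Tendsto (fun v : ℝ => Real.sqrt v * Real.exp (-v)) atTop (nhds 0) := by
    have h := tendsto_rpow_mul_exp_neg_mul_atTop_nhds_zero ((1:ℝ)/2) 1 one_pos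
    apply h.congr'
    filter_upwards [eventually_ge_atTop (0:ℝ)] with v hv
    rw [Real.sqrt_eq_rpow]; ring_nf
  have hg2 : Tendsto (fun v : ℝ => (1 - Real.exp (-v))⁻¹) atTop (nhds 1) := by
    have : Tendsto (fun v : ℝ => 1 - Real.exp (-v)) atTop (nhds 1) := by
      simpa using tendsto_const_nhds.sub tendsto_exp_neg_atTop_nhds_zero
    simpa using this.inv₀ (by norm_num)
  have hg : Tendsto (fun v : ℝ => (Real.sqrt Real.pi)⁻¹ *
      (Real.sqrt v * Real.exp (-v)) * (1 - Real.exp (-v))⁻¹) atTop (nhds 0) := by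
    have := ((hg1.const_mul (Real.sqrt Real.pi)⁻¹).mul hg2)
    simpa using this
  have hG : Tendsto (fun t : ℝ => (Real.sqrt Real.pi)⁻¹ *
      (Real.sqrt (L ^ 2 / t) * Real.exp (-(L ^ 2 / t))) * (1 - Real.exp (-(L ^ 2 / t)))⁻¹)
      (nhdsWithin 0 (Set.Ioi 0)) (nhds 0) := hg.comp hu
  apply squeeze_zero' (g := fun t : ℝ => (Real.sqrt Real.pi)⁻¹ *
      (Real.sqrt (L ^ 2 / t) * Real.exp (-(L ^ 2 / t))) * (1 - Real.exp (-(L ^ 2 / t)))⁻¹)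
    ?_ ?_ hG
  · filter_upwards [self_mem_nhdsWithin] with t (ht : 0 < t)
    have : 0 ≤ L / Real.sqrt (Real.pi * t) := by positivity
    exact mul_nonneg this (thetaTail_nonneg _)
  · filter_upwards [self_mem_nhdsWithin] with t (ht : 0 < t)
    have hc : 0 < L ^ 2 / t := by positivity
    have hLs : L / Real.sqrt (Real.pi * t)
        = (Real.sqrt Real.pi)⁻¹ * Real.sqrt (L ^ 2 / t) := by
      rw [Real.sqrt_div (by positivity : (0:ℝ) ≤ L ^ 2) t, Real.sqrt_sq hL.le,
        Real.sqrt_mul Real.pi_pos.le]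
      have h1 : Real.sqrt Real.pi ≠ 0 := by positivity
      have h2 : Real.sqrt t ≠ 0 := by positivity
      field_simp
    rw [hLs]
    have hle := thetaTail_le hc
    have h1 : 0 ≤ (Real.sqrt Real.pi)⁻¹ * Real.sqrt (L ^ 2 / t) := by positivity
    calc (Real.sqrt Real.pi)⁻¹ * Real.sqrt (L ^ 2 / t) * thetaTail (L ^ 2 / t)
        ≤ (Real.sqrt Real.pi)⁻¹ * Real.sqrt (L ^ 2 / t)
            * (Real.exp (-(L ^ 2 / t)) * (1 - Real.exp (-(L ^ 2 / t)))⁻¹) :=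
          mul_le_mul_of_nonneg_left hle h1
      _ = (Real.sqrt Real.pi)⁻¹ * (Real.sqrt (L ^ 2 / t) * Real.exp (-(L ^ 2 / t)))
            * (1 - Real.exp (-(L ^ 2 / t)))⁻¹ := by ring

/-- Short-time asymptotics of the Dirichlet partition function on the interval `(0, L)`:
`Z(t) = Σ_{m≥1} exp(−m²π²t/L²)` satisfies `Z(t) − L/(2√(πt)) → −1/2` as `t → 0⁺`. -/
theorem dirichlet_partition_interval_short_time (L : ℝ) (hL : 0 < L) :
    Tendsto
      (fun t : ℝ =>
        (∑' m : ℕ, Real.exp (-(((m : ℝ) + 1) ^ 2 * Real.pi ^ 2 * t) / L ^ 2)) -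
          L / (2 * Real.sqrt (Real.pi * t)))
      (nhdsWithin 0 (Set.Ioi 0)) (nhds (-(1 / 2))) := by
  have heq : (fun t : ℝ =>
        (∑' m : ℕ, Real.exp (-(((m : ℝ) + 1) ^ 2 * Real.pi ^ 2 * t) / L ^ 2)) -
          L / (2 * Real.sqrt (Real.pi * t)))
      =ᶠ[nhdsWithin 0 (Set.Ioi 0)]
      (fun t : ℝ => (L / Real.sqrt (Real.pi * t)) * thetaTail (L ^ 2 / t) - 1 / 2) := by
    filter_upwards [self_mem_nhdsWithin] with t (ht : 0 < t)
    exact key_identity L hL ht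
  rw [Filter.tendsto_congr' heq]
  have := (remainder_tendsto L hL).sub_const (1 / 2 : ℝ)
  simpa using this
end

section
/- Let m ∈ ℕ with m ≥ 2 and let t > 0. Then ∫₀^{π/m} ∫₀^∞ (1/(4πt)) ( Σ_{k=1}^{m−1} exp(−(r²/t) sin²(kπ/m)) ) r dr dθ = (1/(8m)) Σ_{k=1}^{m−1} 1/sin²(kπ/m) = (m²−1)/(24m). In particular the result is independent of t, and it is the contribution of the nontrivial rotation elements of the dihedral group Dih_{2m} to the constant (topological) term of the short-time partition function of the infinite plane wedge of opening angle π/m. -/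
/-!
Let `z = e^{2ix}` satisfy `∑_{j<m} z^j = 0`. Since the second difference of `j ↦ j (m - j)` is
constant, `(z - 1)² ∑_{j<m} j (m - j) z^j = 2 m z`, while `(z - 1)² = -4 z sin² x`; hence
`1 / sin² x = -(2/m) ∑_{j<m} j (m - j) z^j`, a finite Fourier expansion of `csc²`. Taking
`x = kπ/m` and summing over `0 < k < m`, every nontrivial character of `ℤ/m` sums to `-1`, so
`∑ 1 / sin²(kπ/m) = (2/m) ∑_{j<m} j (m - j) = (m² - 1)/3`.

The radial integral is the Gaussian moment `∫₀^∞ e^{-a r²} r dr = 1/(2a)` with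
`a = sin²(kπ/m)/t`, which removes `t`; the angular integral only multiplies by `π/m`.
-/

open Real MeasureTheory Finset

section GeomSum

variable {R : Type*} [CommRing R] (z : R) (m : ℕ)

theorem sub_one_mul_sum_range_mul_pow :
    (z - 1) * ∑ j ∈ range m, (j : R) * z ^ j =
      ((m : R) - 1) * z ^ m + 1 - ∑ j ∈ range m, z ^ j := by
  induction m with
  | zero => simp
  | succ n ih =>
    rw [sum_range_succ, sum_range_succ, mul_add, ih]
    push_cast
    ring

theorem sub_one_sq_mul_sum_range_mul_sub_mul_pow :
    (z - 1) ^ 2 * ∑ j ∈ range m, (j : R) * (m - j) * z ^ j =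
      z * ((m : R) + 1 + ((m : R) - 1) * z ^ m - 2 * ∑ j ∈ range m, z ^ j) := by
  induction m with
  | zero => simp
  | succ n ih =>
    have hsplit : ∑ j ∈ range (n + 1), (j : R) * ((n + 1 : ℕ) - j) * z ^ j =
        ∑ j ∈ range (n + 1), (j : R) * (n - j) * z ^ j +
          ∑ j ∈ range (n + 1), (j : R) * z ^ j := by
      rw [← sum_add_distrib]
      push_cast
      exact sum_congr rfl fun j _ => by ring
    rw [hsplit, sum_range_succ (fun j => (j : R) * (n - j) * z ^ j), sub_self, mul_zero,
      zero_mul, add_zero, mul_add, ih, sq, mul_assoc, sub_one_mul_sum_range_mul_pow,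
      sum_range_succ]
    push_cast
    linear_combination mul_neg_geom_sum z n

theorem six_mul_sum_range_mul_sub :
    6 * ∑ j ∈ range m, (j : R) * (m - j) = m * (m ^ 2 - 1) := by
  have gauss : ∀ n : ℕ, 2 * ∑ j ∈ range n, (j : R) = n * (n - 1) := fun n => by
    induction n with
    | zero => simp
    | succ n ih => rw [sum_range_succ, mul_add, ih]; push_cast; ring
  induction m with
  | zero => simp
  | succ n ih =>
    have hsplit : ∑ j ∈ range (n + 1), (j : R) * ((n + 1 : ℕ) - j) =
        ∑ j ∈ range (n + 1), (j : R) * (n - j) + ∑ j ∈ range (n + 1), (j : R) := by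
      rw [← sum_add_distrib]
      push_cast
      exact sum_congr rfl fun j _ => by ring
    rw [hsplit, sum_range_succ (fun j => (j : R) * (n - j)), sub_self, mul_zero, add_zero,
      mul_add, ih, sum_range_succ, mul_add, show (6 : R) = 3 * 2 by norm_num, mul_assoc, gauss]
    push_cast
    ring

end GeomSum

namespace IsPrimitiveRoot

variable {R : Type*} [CommRing R] [IsDomain R] {ζ : R} {k j : ℕ}

theorem geom_sum_pow_eq_zero (hζ : IsPrimitiveRoot ζ k) (hj : ¬ k ∣ j) :
    ∑ i ∈ range k, (ζ ^ j) ^ i = 0 := by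
  refine eq_zero_of_ne_zero_of_mul_left_eq_zero
    (sub_ne_zero_of_ne (Ne.symm (mt (hζ.pow_eq_one_iff_dvd j).1 hj))) ?_
  rw [mul_neg_geom_sum, pow_right_comm, hζ.pow_eq_one, one_pow, sub_self]

theorem sum_Icc_pow_pow_eq_neg_one (hζ : IsPrimitiveRoot ζ k) (hk : k ≠ 0) (hj : ¬ k ∣ j) :
    ∑ i ∈ Icc 1 (k - 1), (ζ ^ i) ^ j = -1 := by
  have h := hζ.geom_sum_pow_eq_zero hj
  rw [range_eq_Ico, sum_eq_sum_Ico_succ_bot (Nat.pos_of_ne_zero hk),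
    ← Icc_sub_one_right_eq_Ico_of_not_isMin (by simpa using hk)] at h
  simp_rw [pow_right_comm ζ _ j]
  linear_combination h

end IsPrimitiveRoot

namespace Complex

theorem exp_two_mul_mul_I_sub_one (x : ℂ) :
    exp (2 * x * I) - 1 = 2 * I * sin x * exp (x * I) := by
  rw [exp_mul_I, exp_mul_I, cos_two_mul, sin_two_mul]
  linear_combination 2 * sin_sq_add_cos_sq x - 2 * sin x ^ 2 * I_sq

theorem two_mul_sin_sq_mul_sum_range {x : ℂ} {m : ℕ}
    (h : ∑ j ∈ range m, exp (2 * x * I) ^ j = 0) :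
    2 * sin x ^ 2 * ∑ j ∈ range m, (j : ℂ) * (m - j) * exp (2 * x * I) ^ j = -m := by
  have hpow : exp (2 * x * I) ^ m = 1 := by
    have := mul_neg_geom_sum (exp (2 * x * I)) m
    rw [h, mul_zero] at this
    linear_combination this
  have hsq : exp (2 * x * I) = exp (x * I) ^ 2 := by
    rw [← exp_nat_mul]; ring_nf
  have key := sub_one_sq_mul_sum_range_mul_sub_mul_pow (exp (2 * x * I)) m
  rw [h, hpow, exp_two_mul_mul_I_sub_one] at key
  set S := ∑ j ∈ range m, (j : ℂ) * (m - j) * exp (2 * x * I) ^ j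
  refine mul_left_cancel₀ (exp_ne_zero (2 * x * I)) ?_
  linear_combination (-1 / 2 : ℂ) * key + 2 * sin x ^ 2 * S * hsq +
    2 * sin x ^ 2 * S * exp (x * I) ^ 2 * I_sq

end Complex

theorem sin_nat_mul_pi_div_pos {m k : ℕ} (hk0 : 0 < k) (hkm : k < m) :
    0 < Real.sin (k * π / m) := by
  have hk0' : (0 : ℝ) < k := by exact_mod_cast hk0
  have hkm' : (k : ℝ) < m := by exact_mod_cast hkm
  apply Real.sin_pos_of_pos_of_lt_pi (div_pos (mul_pos hk0' pi_pos) (hk0'.trans hkm'))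
  rw [div_lt_iff₀ (hk0'.trans hkm'), mul_comm]
  exact mul_lt_mul_of_pos_left hkm' pi_pos

theorem sum_inv_sin_sq_nat_mul_pi_div {m : ℕ} (hm : m ≠ 0) :
    ∑ k ∈ Icc 1 (m - 1), 1 / Real.sin (k * π / m) ^ 2 = ((m : ℝ) ^ 2 - 1) / 3 := by
  set ζ := Complex.exp (2 * π * Complex.I / m) with hζdef
  have hζ : IsPrimitiveRoot ζ m := Complex.isPrimitiveRoot_exp m hm
  have hexp : ∀ k : ℕ, Complex.exp (2 * (k * π / m : ℂ) * Complex.I) = ζ ^ k := fun k => by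
    rw [hζdef, ← Complex.exp_nat_mul]; ring_nf
  have hexpand : ∀ k ∈ Icc 1 (m - 1), (1 / Complex.sin (k * π / m) ^ 2 : ℂ) =
      -(2 / m) * ∑ j ∈ range m, (j : ℂ) * (m - j) * (ζ ^ k) ^ j := by
    intro k hk
    obtain ⟨hk0, hkm⟩ : 0 < k ∧ k < m := by grind
    have hs : Complex.sin (k * π / m) ≠ 0 := by
      exact_mod_cast (sin_nat_mul_pi_div_pos hk0 hkm).ne'
    have h := Complex.two_mul_sin_sq_mul_sum_range (x := k * π / m) (m := m)
      (by rw [hexp]; exact hζ.geom_sum_pow_eq_zero (Nat.not_dvd_of_pos_of_lt hk0 hkm))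
    rw [hexp] at h
    -- opaque to `field_simp`, which would otherwise rewrite the exponent of `ζ` inside the sum
    set S := ∑ j ∈ range m, (j : ℂ) * (m - j) * (ζ ^ k) ^ j
    field_simp
    linear_combination h
  have horth : ∀ j ∈ range m,
      ∑ k ∈ Icc 1 (m - 1), (j : ℂ) * (m - j) * (ζ ^ k) ^ j = -((j : ℂ) * (m - j)) := by
    intro j hj
    rcases Nat.eq_zero_or_pos j with rfl | hj0
    · simp
    · rw [← mul_sum, hζ.sum_Icc_pow_pow_eq_neg_one hm
        (Nat.not_dvd_of_pos_of_lt hj0 (mem_range.1 hj)), mul_neg_one]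
  apply Complex.ofReal_injective
  push_cast
  rw [sum_congr rfl hexpand, ← mul_sum, sum_comm, sum_congr rfl horth, sum_neg_distrib]
  have hm' : (m : ℂ) ≠ 0 := Nat.cast_ne_zero.2 hm
  field_simp
  linear_combination six_mul_sum_range_mul_sub (R := ℂ) m

theorem integral_Ioi_exp_neg_mul_sq_mul {a : ℝ} (ha : 0 < a) :
    ∫ r in Set.Ioi (0 : ℝ), Real.exp (-a * r ^ 2) * r = (2 * a)⁻¹ := by
  rw [← Complex.ofReal_inj, ← integral_complex_ofReal]
  push_cast
  rw [← integral_mul_cexp_neg_mul_sq (b := (a : ℂ)) (by simpa using ha)]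
  exact setIntegral_congr_fun measurableSet_Ioi fun r _ => mul_comm _ _

theorem integral_Ioi_sum_exp_neg_sq_div_mul_mul {ι : Type*} (s : Finset ι) {b : ι → ℝ}
    (hb : ∀ k ∈ s, 0 < b k) {t : ℝ} (ht : 0 < t) :
    ∫ r in Set.Ioi (0 : ℝ), (∑ k ∈ s, Real.exp (-(r ^ 2 / t) * b k)) * r =
      ∑ k ∈ s, t / (2 * b k) := by
  have hrescale : ∀ k r,
      Real.exp (-(r ^ 2 / t) * b k) * r = Real.exp (-(b k / t) * r ^ 2) * r :=
    fun k r => by ring_nf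
  simp_rw [sum_mul, hrescale]
  rw [integral_finsetSum]
  · refine sum_congr rfl fun k hk => ?_
    rw [integral_Ioi_exp_neg_mul_sq_mul (div_pos (hb k hk) ht)]
    field_simp
  · intro k hk
    exact (integrable_mul_exp_neg_mul_sq (div_pos (hb k hk) ht)).integrableOn.congr_fun
      (fun r _ => mul_comm _ _) measurableSet_Ioi

/-- The contribution of the nontrivial rotations of `Dih_{2m}` to the constant term of the
short-time partition function of the infinite plane wedge of opening angle `π/m`:
`∫₀^{π/m} ∫₀^∞ (1/(4πt)) Σ_{k=1}^{m−1} exp(−(r²/t) sin²(kπ/m)) r dr dθ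
  = (1/(8m)) Σ_{k=1}^{m−1} 1/sin²(kπ/m) = (m²−1)/(24m)`, independently of `t`. -/
theorem wedge_rotation_contribution (m : ℕ) (hm : 2 ≤ m) (t : ℝ) (ht : 0 < t) :
    (∫ θ in (0:ℝ)..(Real.pi / m),
        ∫ r in Set.Ioi (0:ℝ),
          (1 / (4 * Real.pi * t)) *
            (∑ k ∈ Finset.Icc 1 (m - 1),
              Real.exp (-(r ^ 2 / t) * Real.sin ((k : ℝ) * Real.pi / m) ^ 2)) * r) =
      (1 / (8 * (m : ℝ))) *
        ∑ k ∈ Finset.Icc 1 (m - 1), 1 / Real.sin ((k : ℝ) * Real.pi / m) ^ 2 ∧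
    (1 / (8 * (m : ℝ))) *
        (∑ k ∈ Finset.Icc 1 (m - 1), 1 / Real.sin ((k : ℝ) * Real.pi / m) ^ 2) =
      ((m : ℝ) ^ 2 - 1) / (24 * m) := by
  have hsin : ∀ k ∈ Icc 1 (m - 1), 0 < Real.sin (k * π / m) ^ 2 := fun k hk =>
    pow_pos (sin_nat_mul_pi_div_pos (by grind) (by grind)) 2
  have hradial : ∫ r in Set.Ioi (0 : ℝ), (1 / (4 * π * t)) *
      (∑ k ∈ Icc 1 (m - 1), Real.exp (-(r ^ 2 / t) * Real.sin (k * π / m) ^ 2)) * r =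
      (1 / (8 * π)) * ∑ k ∈ Icc 1 (m - 1), 1 / Real.sin (k * π / m) ^ 2 := by
    simp_rw [mul_assoc]
    rw [integral_const_mul, integral_Ioi_sum_exp_neg_sq_div_mul_mul _ hsin ht, mul_sum, mul_sum]
    refine sum_congr rfl fun k _ => ?_
    field_simp
    ring
  have hm0 : (m : ℝ) ≠ 0 := Nat.cast_ne_zero.2 (by omega)
  refine ⟨?_, ?_⟩
  · rw [intervalIntegral.integral_const, hradial, smul_eq_mul, sub_zero]
    field_simp
  · rw [sum_inv_sin_sq_nat_mul_pi_div (by omega)]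
    field_simp
    ring
end

section
/- For every integer m ≥ 2, Σ_{k=1}^{m−1} 1/sin²(kπ/m) = (m² − 1)/3. -/
/-!
For `x = exp (2πik/m) ≠ 1` one has `(1 - x) ∑_{j<m} j xʲ = -m` and
`(1 - x)(1 - x⁻¹) = 4 sin²(πk/m)`, so `1 / sin²(πk/m) = (4/m²) |∑_{j<m} j xʲ|²`.
Summing over all `k < m`, Plancherel's identity for the discrete Fourier transform turns the
right-hand side into `(4/m²) m ∑ j²`; removing the term `k = 0`, which is `(∑ j)²`, leaves
`(4/m²) (m ∑ j² - (∑ j)²) = (m² - 1)/3`.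
-/

open Finset Complex Real

section

variable {R : Type*} [CommRing R]

lemma one_sub_mul_sum_range_natCast_mul_pow (x : R) (n : ℕ) :
    (1 - x) * ∑ j ∈ range n, (j : R) * x ^ j = x * ∑ j ∈ range n, x ^ j - n * x ^ n := by
  induction n with
  | zero => simp
  | succ n ih =>
    rw [sum_range_succ, sum_range_succ, mul_add, ih]
    push_cast
    ring

lemma sum_range_natCast_mul_two (n : ℕ) :
    2 * ∑ j ∈ range n, (j : R) = n * (n - 1) := by
  induction n with
  | zero => simp
  | succ n ih =>
    rw [sum_range_succ, mul_add, ih]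
    push_cast
    ring

lemma sum_range_natCast_sq_mul_six (n : ℕ) :
    6 * ∑ j ∈ range n, (j : R) ^ 2 = n * (n - 1) * (2 * n - 1) := by
  induction n with
  | zero => simp
  | succ n ih =>
    rw [sum_range_succ, mul_add, ih]
    push_cast
    ring

variable [IsDomain R] {x : R} {n : ℕ}

lemma geom_sum_eq_zero_of_pow_eq_one (hx : x ^ n = 1) (hx1 : x ≠ 1) :
    ∑ i ∈ range n, x ^ i = 0 :=
  eq_zero_of_ne_zero_of_mul_left_eq_zero (sub_ne_zero_of_ne hx1.symm)
    (by rw [mul_neg_geom_sum, hx, sub_self])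

lemma one_sub_mul_sum_range_natCast_mul_pow_of_pow_eq_one (hx : x ^ n = 1) (hx1 : x ≠ 1) :
    (1 - x) * ∑ j ∈ range n, (j : R) * x ^ j = -n := by
  rw [one_sub_mul_sum_range_natCast_mul_pow, geom_sum_eq_zero_of_pow_eq_one hx hx1, hx]
  ring

end

namespace IsPrimitiveRoot

variable {K : Type*} [Field K] {ζ : K} {m : ℕ}

lemma sum_range_pow_mul_inv_pow_pow (hζ : IsPrimitiveRoot ζ m) {j l : ℕ} (hj : j < m)
    (hl : l < m) : ∑ k ∈ range m, (ζ ^ j * ζ⁻¹ ^ l) ^ k = if j = l then (m : K) else 0 := by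
  have hζ0 : ζ ≠ 0 := hζ.ne_zero (by omega)
  split_ifs with hjl
  · simp [hjl, hζ0]
  · refine geom_sum_eq_zero_of_pow_eq_one ?_ fun h ↦ hjl (hζ.pow_inj hj hl ?_)
    · rw [mul_pow, ← pow_mul, ← pow_mul, inv_pow, mul_comm j, mul_comm l, pow_mul, pow_mul,
        hζ.pow_eq_one]
      simp
    · rwa [inv_pow, mul_inv_eq_one₀ (pow_ne_zero _ hζ0)] at h

/-- Plancherel's identity for the discrete Fourier transform on `range m`. -/
lemma sum_range_mul_sum_range_inv_pow (hζ : IsPrimitiveRoot ζ m) (a b : ℕ → K) :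
    ∑ k ∈ range m, (∑ j ∈ range m, a j * (ζ ^ k) ^ j) * (∑ l ∈ range m, b l * (ζ⁻¹ ^ k) ^ l) =
      m * ∑ j ∈ range m, a j * b j := by
  calc _ = ∑ j ∈ range m, ∑ l ∈ range m, a j * b l * ∑ k ∈ range m, (ζ ^ j * ζ⁻¹ ^ l) ^ k := by
        simp_rw [sum_mul_sum, mul_sum]
        rw [sum_comm]
        refine sum_congr rfl fun j _ ↦ ?_
        rw [sum_comm]
        refine sum_congr rfl fun l _ ↦ sum_congr rfl fun k _ ↦ ?_
        ring
    _ = ∑ j ∈ range m, a j * b j * m := by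
        refine sum_congr rfl fun j hj ↦ ?_
        rw [sum_eq_single j]
        · rw [hζ.sum_range_pow_mul_inv_pow_pow (mem_range.1 hj) (mem_range.1 hj), if_pos rfl]
        · intro l hl hlj
          rw [hζ.sum_range_pow_mul_inv_pow_pow (mem_range.1 hj) (mem_range.1 hl),
            if_neg (Ne.symm hlj), mul_zero]
        · exact fun h ↦ absurd hj h
    _ = _ := by rw [mul_sum]; exact sum_congr rfl fun j _ ↦ mul_comm _ _

end IsPrimitiveRoot

lemma one_sub_exp_mul_one_sub_exp_neg (θ : ℝ) :
    (1 - exp (θ * I)) * (1 - exp (-θ * I)) = 4 * (Real.sin (θ / 2) : ℂ) ^ 2 := by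
  have hexp : exp (θ * I) * exp (-θ * I) = 1 := by rw [← Complex.exp_add]; simp
  have hcos : cos (θ : ℂ) = 1 - 2 * (Real.sin (θ / 2) : ℂ) ^ 2 := by
    rw [← ofReal_cos, ← mul_div_cancel₀ θ (two_ne_zero' ℝ), Real.cos_two_mul, Real.cos_sq']
    push_cast
    ring_nf
  linear_combination hexp + two_cos (θ : ℂ) - 2 * hcos

lemma inv_sin_sq_eq_mul_sum_mul_sum {m k : ℕ} (hk : 0 < k) (hkm : k < m) :
    ((1 / Real.sin (k * π / m) ^ 2 : ℝ) : ℂ) = 4 / (m : ℂ) ^ 2 *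
      ((∑ j ∈ range m, (j : ℂ) * (exp (2 * π * I / m) ^ k) ^ j) *
        ∑ j ∈ range m, (j : ℂ) * ((exp (2 * π * I / m))⁻¹ ^ k) ^ j) := by
  set ζ := exp (2 * π * I / m)
  have hζ : IsPrimitiveRoot ζ m := isPrimitiveRoot_exp m (by omega)
  have hx : (ζ ^ k) ^ m = 1 := by rw [← pow_mul, pow_mul', hζ.pow_eq_one, one_pow]
  have hx1 : ζ ^ k ≠ 1 := hζ.pow_ne_one_of_pos_of_lt hk.ne' hkm
  have hxinv : (ζ⁻¹ ^ k) ^ m = 1 := by rw [inv_pow, inv_pow, hx, inv_one]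
  have hxinv1 : ζ⁻¹ ^ k ≠ 1 := by rwa [inv_pow, Ne, inv_eq_one]
  have hθ : ζ ^ k = exp ((2 * k * π / m : ℝ) * I) := by
    rw [← Complex.exp_nat_mul]; push_cast; ring_nf
  have hsin := one_sub_exp_mul_one_sub_exp_neg (2 * k * π / m)
  rw [← hθ, neg_mul, Complex.exp_neg, ← hθ, ← inv_pow,
    show 2 * k * π / m / 2 = k * π / m by ring] at hsin
  have hsin0 : Real.sin (k * π / m) ≠ 0 := by
    have hm_pos : (0 : ℝ) < m := by exact_mod_cast hk.trans hkm
    refine (Real.sin_pos_of_pos_of_lt_pi (by positivity) ?_).ne'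
    rw [div_lt_iff₀ hm_pos, mul_comm]
    exact mul_lt_mul_of_pos_left (by exact_mod_cast hkm) pi_pos
  have hm : (m : ℂ) ≠ 0 := Nat.cast_ne_zero.2 (by omega)
  set S := ∑ j ∈ range m, (j : ℂ) * (ζ ^ k) ^ j
  set S' := ∑ j ∈ range m, (j : ℂ) * (ζ⁻¹ ^ k) ^ j
  have h1 : (1 - ζ ^ k) * S = -m := one_sub_mul_sum_range_natCast_mul_pow_of_pow_eq_one hx hx1
  have h2 : (1 - ζ⁻¹ ^ k) * S' = -m :=
    one_sub_mul_sum_range_natCast_mul_pow_of_pow_eq_one hxinv hxinv1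
  have key : 4 * (Real.sin (k * π / m) : ℂ) ^ 2 * (S * S') = (m : ℂ) ^ 2 := by
    rw [← hsin]; linear_combination ((1 - ζ⁻¹ ^ k) * S') * h1 - m * h2
  have hsinC : (Real.sin (k * π / m) : ℂ) ≠ 0 := ofReal_ne_zero.2 hsin0
  rw [ofReal_div, ofReal_one, ofReal_pow]
  field_simp
  linear_combination -key

/-- For every integer `m ≥ 2`, `Σ_{k=1}^{m−1} 1/sin²(kπ/m) = (m² − 1)/3`. -/
theorem sum_inv_sin_sq (m : ℕ) (hm : 2 ≤ m) :
    (∑ k ∈ Finset.Icc 1 (m - 1), 1 / Real.sin ((k : ℝ) * Real.pi / m) ^ 2) =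
      ((m : ℝ) ^ 2 - 1) / 3 := by
  set ζ := exp (2 * π * I / m)
  set F : ℕ → ℂ := fun k ↦
    (∑ j ∈ range m, (j : ℂ) * (ζ ^ k) ^ j) * ∑ j ∈ range m, (j : ℂ) * (ζ⁻¹ ^ k) ^ j
  have hplancherel : ∑ k ∈ range m, F k = m * ∑ j ∈ range m, (j : ℂ) ^ 2 := by
    simpa only [sq] using (isPrimitiveRoot_exp m (by omega)).sum_range_mul_sum_range_inv_pow
      (fun j ↦ (j : ℂ)) (fun j ↦ (j : ℂ))
  have hF0 : F 0 = (∑ j ∈ range m, (j : ℂ)) ^ 2 := by simp [F, sq]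
  have hIco : ∑ k ∈ Ico 1 m, F k = m * ∑ j ∈ range m, (j : ℂ) ^ 2 - F 0 := by
    rw [← hplancherel, range_eq_Ico, sum_eq_sum_Ico_succ_bot (by omega : 0 < m)]
    ring
  have hA : ∑ j ∈ range m, (j : ℂ) = m * (m - 1) / 2 := by
    linear_combination sum_range_natCast_mul_two (R := ℂ) m / 2
  have hB : ∑ j ∈ range m, (j : ℂ) ^ 2 = m * (m - 1) * (2 * m - 1) / 6 := by
    linear_combination sum_range_natCast_sq_mul_six (R := ℂ) m / 6
  have hm0 : (m : ℂ) ≠ 0 := Nat.cast_ne_zero.2 (by omega)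
  apply ofReal_injective
  rw [Icc_sub_one_right_eq_Ico_of_not_isMin (not_isMin_iff_ne_bot.2 (by positivity)), ofReal_sum,
    sum_congr rfl fun k hk ↦ inv_sin_sq_eq_mul_sum_mul_sum (mem_Ico.1 hk).1 (mem_Ico.1 hk).2,
    ← mul_sum, hIco, hF0, hA, hB]
  push_cast
  field_simp
  ring
end

section
/- For every integer m ≥ 2, Σ_{k=1}^{m−1} cot²(kπ/m) = (m − 1)(m − 2)/3. -/
/-!
With `ζ = exp (2πi/m)` one has `cot (kπ/m) = i (ζᵏ + 1) / (ζᵏ - 1)`. At a root `z ≠ 1` of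
`z ^ m = 1` the square `((z + 1) / (z - 1))²` agrees with the polynomial
`1 + (2/m) ∑_{n<m} n (m - n) zⁿ` of degree `< m`, and summing such a polynomial over the
nontrivial `m`-th roots of unity gives `m` times its constant term minus its value at `1`.
Hence `∑ₖ cot² (kπ/m) = -(m - 1) + (2/m) ∑_{n<m} n (m - n) = -(m - 1) + (m² - 1)/3`.
-/

open Real Finset

section CommRing

variable {R : Type*} [CommRing R]

theorem sum_range_natCast_mul_pow_mul_sub_one (z : R) (N : ℕ) :
    (∑ n ∈ range N, (n : R) * z ^ n) * (z - 1) = N * z ^ N - z * ∑ n ∈ range N, z ^ n := by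
  induction N with
  | zero => simp
  | succ N ih => rw [sum_range_succ, add_mul, ih, sum_range_succ]; push_cast; ring

theorem sum_range_natCast_sq_mul_pow_mul_sub_one (z : R) (N : ℕ) :
    (∑ n ∈ range N, (n : R) ^ 2 * z ^ n) * (z - 1) =
      N ^ 2 * z ^ N - z * ∑ n ∈ range N, (2 * n + 1 : R) * z ^ n := by
  induction N with
  | zero => simp
  | succ N ih => rw [sum_range_succ, add_mul, ih, sum_range_succ]; push_cast; ring

theorem sum_range_mul_sub_mul_pow_mul_sub_one_sq {z : R} {N : ℕ} (hz : z ^ N = 1)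
    (hgeom : ∑ n ∈ range N, z ^ n = 0) :
    (∑ n ∈ range N, (n * (N - n) : R) * z ^ n) * (z - 1) ^ 2 = 2 * N * z := by
  have h₁ := sum_range_natCast_mul_pow_mul_sub_one z N
  have h₂ := sum_range_natCast_sq_mul_pow_mul_sub_one z N
  simp only [add_mul, sum_add_distrib, mul_assoc, ← mul_sum, one_mul, hz, hgeom] at h₁ h₂
  have hsplit : ∑ n ∈ range N, (n * (N - n) : R) * z ^ n =
      N * ∑ n ∈ range N, (n : R) * z ^ n - ∑ n ∈ range N, (n : R) ^ 2 * z ^ n := by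
    rw [mul_sum, ← sum_sub_distrib]
    exact sum_congr rfl fun n _ ↦ by ring
  rw [hsplit]
  linear_combination (N * (z - 1) + 2 * z) * h₁ - (z - 1) * h₂

theorem sum_range_natCast_mul_sub (M N : ℕ) :
    6 * ∑ n ∈ range N, (n * (M - n) : R) = N * (N - 1) * (3 * M - 2 * N + 1) := by
  induction N with
  | zero => simp
  | succ N ih => rw [sum_range_succ, mul_add, ih]; push_cast; ring

end CommRing

theorem mul_add_one_div_sub_one_sq_of_pow_eq_one {K : Type*} [Field K] {z : K} {N : ℕ}
    (hz : z ^ N = 1) (hz1 : z ≠ 1) :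
    N * ((z + 1) / (z - 1)) ^ 2 = N + 2 * ∑ n ∈ range N, (n * (N - n) : K) * z ^ n := by
  have hgeom : ∑ n ∈ range N, z ^ n = 0 := by simp [geom_sum_eq hz1, hz]
  have key := sum_range_mul_sub_mul_pow_mul_sub_one_sq hz hgeom
  have hsub : z - 1 ≠ 0 := sub_ne_zero.mpr hz1
  field_simp
  linear_combination (-2) * key

namespace IsPrimitiveRoot

variable {R : Type*} [CommRing R] [IsDomain R] {ζ : R} {m : ℕ}

theorem sum_range_pow_pow_eq_zero (hζ : IsPrimitiveRoot ζ m) {n : ℕ} (hn0 : n ≠ 0)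
    (hnm : n < m) : ∑ k ∈ range m, (ζ ^ k) ^ n = 0 := by
  have hne : ζ ^ n - 1 ≠ 0 := sub_ne_zero.mpr (hζ.pow_ne_one_of_pos_of_lt hn0 hnm)
  refine (mul_eq_zero.mp ?_).resolve_right hne
  simp_rw [← pow_mul, mul_comm _ n, pow_mul]
  rw [geom_sum_mul, ← pow_mul, mul_comm, pow_mul, hζ.pow_eq_one, one_pow, sub_self]

theorem sum_Icc_sum_range_mul_pow (hζ : IsPrimitiveRoot ζ m) (f : ℕ → R) :
    ∑ k ∈ Icc 1 (m - 1), ∑ n ∈ range m, f n * (ζ ^ k) ^ n = m * f 0 - ∑ n ∈ range m, f n := by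
  obtain _ | m := m
  · simp
  have hfull : ∑ k ∈ range (m + 1), ∑ n ∈ range (m + 1), f n * (ζ ^ k) ^ n = (m + 1) * f 0 := by
    rw [sum_comm]
    simp_rw [← mul_sum]
    rw [sum_range_succ', sum_eq_zero fun n hn ↦ by
      rw [hζ.sum_range_pow_pow_eq_zero n.succ_ne_zero (by simpa using hn), mul_zero]]
    simp [mul_comm]
  rw [Nat.add_sub_cancel, ← Ico_add_one_right_eq_Icc, sum_Ico_eq_sum_range, Nat.add_sub_cancel,
    Nat.cast_succ, ← hfull, sum_range_succ']
  simp [add_comm]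

end IsPrimitiveRoot

theorem Complex.cot_sq_eq_neg_exp_ratio_sq (z : ℂ) :
    Complex.cot z ^ 2 =
      -((Complex.exp (2 * I * z) + 1) / (Complex.exp (2 * I * z) - 1)) ^ 2 := by
  rw [Complex.cot_eq_exp_ratio, ← neg_sub _ (1 : ℂ), mul_neg, div_neg, neg_sq, div_pow, div_pow,
    mul_pow, I_sq, neg_one_mul, div_neg]

/-- For every integer `m ≥ 2`, `Σ_{k=1}^{m−1} cot²(kπ/m) = (m − 1)(m − 2)/3`. -/
theorem sum_cot_sq (m : ℕ) (hm : 2 ≤ m) :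
    (∑ k ∈ Finset.Icc 1 (m - 1), Real.cot ((k : ℝ) * Real.pi / m) ^ 2) =
      ((m : ℝ) - 1) * ((m : ℝ) - 2) / 3 := by
  have hm0 : (m : ℂ) ≠ 0 := by norm_cast; omega
  set ζ := Complex.exp (2 * π * Complex.I / m)
  have hζ : IsPrimitiveRoot ζ m := Complex.isPrimitiveRoot_exp m (by omega)
  have hcot (k : ℕ) : Complex.cot (k * π / m) ^ 2 = -((ζ ^ k + 1) / (ζ ^ k - 1)) ^ 2 := by
    have harg : 2 * Complex.I * (k * π / m) = k * (2 * π * Complex.I / m) := by ring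
    rw [Complex.cot_sq_eq_neg_exp_ratio_sq, harg, Complex.exp_nat_mul]
  have hsq : ∀ k ∈ Icc 1 (m - 1), (m : ℂ) * ((ζ ^ k + 1) / (ζ ^ k - 1)) ^ 2 =
      m + ∑ n ∈ range m, 2 * (n * (m - n) : ℂ) * (ζ ^ k) ^ n := fun k hk ↦ by
    rw [mem_Icc] at hk
    rw [mul_add_one_div_sub_one_sq_of_pow_eq_one (by rw [pow_right_comm, hζ.pow_eq_one, one_pow])
      (hζ.pow_ne_one_of_pos_of_lt (by omega) (by omega)), mul_sum]
    simp_rw [mul_assoc]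
  have hsum := hζ.sum_Icc_sum_range_mul_pow fun n ↦ 2 * (n * (m - n) : ℂ)
  have hcube := sum_range_natCast_mul_sub (R := ℂ) m m
  apply Complex.ofReal_injective
  push_cast
  simp_rw [hcot, sum_neg_distrib]
  apply mul_left_cancel₀ hm0
  rw [mul_neg, mul_sum, sum_congr rfl hsq, sum_add_distrib, hsum, sum_const, Nat.card_Icc,
    ← mul_sum, nsmul_eq_mul, Nat.add_sub_cancel, Nat.cast_sub (by omega)]
  push_cast
  linear_combination hcube / 3
end

section
/- Let a, b, c > 0 and consider the Dirichlet Laplacian on the rectangular parallelepiped (0, a) × (0, b) × (0, c), whose eigenvalues are λ_{k,l,m} = π²(k²/a² + l²/b² + m²/c²) for integers k, l, m ≥ 1. Then the Dirichlet partition function Z(t) = Σ_{k,l,m≥1} exp(−π²(k²/a² + l²/b² + m²/c²) t) satisfies lim_{t→0⁺} ( Z(t) − abc/(4πt)^{3/2} + (ab + bc + ac)/(8πt) − (a + b + c)/(8√(πt)) ) = −1/8; that is, Z(t) ∼ abc/(4πt)^{3/2} − 2(ab + bc + ac)/(16πt) + 4(a + b + c)/(32√(πt)) − 1/8 as t → 0⁺.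 -/
open Real Filter

/-- Summability of the shifted Gaussian-type series. -/
lemma summable_exp_sq {α : ℝ} (hα : 0 < α) :
    Summable fun k : ℕ => Real.exp (-(α * ((k : ℝ) + 1) ^ 2)) := by
  refine Summable.of_nonneg_of_le (fun k => (Real.exp_pos _).le) (fun k => ?_)
    ((summable_geometric_of_lt_one (Real.exp_pos (-α)).le
      (Real.exp_lt_one_iff.mpr (by linarith))).mul_left (Real.exp (-α)))
  have : Real.exp (-α) * Real.exp (-α) ^ k = Real.exp (-(α * ((k : ℝ) + 1))) := by
    rw [← Real.exp_nat_mul, ← Real.exp_add]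
    ring_nf
  rw [this]
  apply Real.exp_le_exp.mpr
  have hk0 : (0 : ℝ) ≤ (k : ℝ) := Nat.cast_nonneg k
  have h2 : α * ((k : ℝ) + 1) ≤ α * ((k : ℝ) + 1) ^ 2 := by
    nlinarith [mul_nonneg (mul_nonneg hα.le hk0) (by linarith : (0:ℝ) ≤ (k:ℝ)+1)]
  linarith

/-- Splitting of the integer theta sum. -/
lemma theta_split {α : ℝ} (hα : 0 < α) :
    (∑' n : ℤ, Real.exp (-Real.pi * α * (n : ℝ) ^ 2))
      = 1 + 2 * ∑' k : ℕ, Real.exp (-(Real.pi * α * ((k : ℝ) + 1) ^ 2)) := by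
  have hπα : 0 < Real.pi * α := by positivity
  have hN1 : Summable fun k : ℕ => Real.exp (-(Real.pi * α * ((k : ℝ) + 1) ^ 2)) :=
    summable_exp_sq hπα
  have hfn : Summable fun n : ℕ => Real.exp (-Real.pi * α * ((n : ℤ) : ℝ) ^ 2) := by
    rw [← summable_nat_add_iff 1]
    refine hN1.congr fun k => ?_
    congr 1
    push_cast
    ring
  have hfneg : Summable fun n : ℕ =>
      Real.exp (-Real.pi * α * (((-((n : ℤ) + 1)) : ℤ) : ℝ) ^ 2) := by
    refine hN1.congr fun k => ?_
    congr 1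
    push_cast
    ring
  have key := tsum_of_nat_of_neg_add_one
    (f := fun n : ℤ => Real.exp (-Real.pi * α * (n : ℝ) ^ 2)) hfn hfneg
  rw [key]
  have h1 : (∑' n : ℕ, Real.exp (-Real.pi * α * (((-((n : ℤ) + 1)) : ℤ) : ℝ) ^ 2))
      = ∑' k : ℕ, Real.exp (-(Real.pi * α * ((k : ℝ) + 1) ^ 2)) := by
    refine tsum_congr fun k => ?_
    congr 1
    push_cast
    ring
  have h2 : (∑' n : ℕ, Real.exp (-Real.pi * α * ((n : ℤ) : ℝ) ^ 2))
      = 1 + ∑' k : ℕ, Real.exp (-(Real.pi * α * ((k : ℝ) + 1) ^ 2)) := by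
    rw [Summable.tsum_eq_zero_add hfn]
    congr 1
    · norm_num
    · refine tsum_congr fun k => ?_
      congr 1
      push_cast
      ring
  rw [h1, h2]
  ring

/-- One-dimensional theta transformation for the half sum. -/
lemma half_theta {α : ℝ} (hα : 0 < α) :
    (∑' k : ℕ, Real.exp (-(Real.pi * α * ((k : ℝ) + 1) ^ 2)))
      = 1 / (2 * Real.sqrt α) - 1 / 2
        + (1 / Real.sqrt α) * ∑' k : ℕ, Real.exp (-(Real.pi * α⁻¹ * ((k : ℝ) + 1) ^ 2)) := by
  have key := Real.tsum_exp_neg_mul_int_sq hα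
  have hinv : 0 < α⁻¹ := by positivity
  rw [theta_split hα] at key
  have hR : (∑' n : ℤ, Real.exp (-Real.pi / α * (n : ℝ) ^ 2))
      = 1 + 2 * ∑' k : ℕ, Real.exp (-(Real.pi * α⁻¹ * ((k : ℝ) + 1) ^ 2)) := by
    rw [← theta_split hinv]
    refine tsum_congr fun n => ?_
    congr 1
  rw [hR, ← Real.sqrt_eq_rpow] at key
  have hs : 0 < Real.sqrt α := Real.sqrt_pos.mpr hα
  linear_combination key / 2

noncomputable def boxP (d t : ℝ) : ℝ := d / (2 * Real.sqrt (Real.pi * t)) - 1 / 2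

noncomputable def thetaRem (d t : ℝ) : ℝ :=
  d / Real.sqrt (Real.pi * t) *
    ∑' k : ℕ, Real.exp (-(Real.pi * (Real.pi * t / d ^ 2)⁻¹ * ((k : ℝ) + 1) ^ 2))

/-- Exact 1-D theta expansion of the Dirichlet series of the interval. -/
lemma Sd_eq {d t : ℝ} (hd : 0 < d) (ht : 0 < t) :
    (∑' k : ℕ, Real.exp (-(Real.pi ^ 2 * (((k : ℝ) + 1) ^ 2 / d ^ 2)) * t))
      = boxP d t + thetaRem d t := by
  have hα : 0 < Real.pi * t / d ^ 2 := by positivity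
  have h1 : (∑' k : ℕ, Real.exp (-(Real.pi ^ 2 * (((k : ℝ) + 1) ^ 2 / d ^ 2)) * t))
      = ∑' k : ℕ, Real.exp (-(Real.pi * (Real.pi * t / d ^ 2) * ((k : ℝ) + 1) ^ 2)) := by
    refine tsum_congr fun k => ?_
    congr 1
    field_simp
  rw [h1, half_theta hα]
  have hsd : Real.sqrt (Real.pi * t / d ^ 2) = Real.sqrt (Real.pi * t) / d := by
    rw [Real.sqrt_div (by positivity), Real.sqrt_sq hd.le]
  have hw : 0 < Real.sqrt (Real.pi * t) := Real.sqrt_pos.mpr (by positivity)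
  rw [hsd]
  unfold boxP thetaRem
  have : (1 : ℝ) / (Real.sqrt (Real.pi * t) / d) = d / Real.sqrt (Real.pi * t) := by
    field_simp
  rw [this]
  congr 1
  field_simp

/-- The remainder is `o(t)` as `t → 0⁺`. -/
lemma q_lim {d : ℝ} (hd : 0 < d) :
    Tendsto (fun t => thetaRem d t / t) (nhdsWithin 0 (Set.Ioi 0)) (nhds 0) := by
  have hg : Tendsto (fun t : ℝ => 2 * d / Real.sqrt Real.pi *
      ((t⁻¹) ^ ((3 : ℝ) / 2) * Real.exp (-d ^ 2 * t⁻¹)))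
      (nhdsWithin 0 (Set.Ioi 0)) (nhds 0) := by
    have h0 := (tendsto_rpow_mul_exp_neg_mul_atTop_nhds_zero ((3 : ℝ) / 2) (d ^ 2)
      (by positivity)).comp tendsto_inv_nhdsGT_zero
    have := h0.const_mul (2 * d / Real.sqrt Real.pi)
    simpa using this
  refine squeeze_zero' ?_ ?_ hg
  · filter_upwards [self_mem_nhdsWithin] with t ht
    have ht' : (0 : ℝ) < t := ht
    unfold thetaRem
    have : 0 ≤ ∑' k : ℕ, Real.exp (-(Real.pi * (Real.pi * t / d ^ 2)⁻¹ * ((k : ℝ) + 1) ^ 2)) :=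
      tsum_nonneg fun k => (Real.exp_pos _).le
    positivity
  · filter_upwards [Ioo_mem_nhdsGT_of_mem
      (Set.mem_Ico.mpr ⟨le_refl (0:ℝ), (by positivity : (0:ℝ) < d ^ 2)⟩)] with t ht
    obtain ⟨ht0, htd⟩ := ht
    have hπt : (0 : ℝ) < Real.pi * t := by positivity
    have hw : 0 < Real.sqrt (Real.pi * t) := Real.sqrt_pos.mpr hπt
    have hβ : Real.pi * (Real.pi * t / d ^ 2)⁻¹ = d ^ 2 / t := by
      field_simp
    set E := Real.exp (-(d ^ 2 / t)) with hE
    have hE1 : E < 1 / 2 := by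
      have h1 : (1 : ℝ) < d ^ 2 / t := (one_lt_div ht0).mpr htd
      have : E < Real.exp (-1) := Real.exp_lt_exp.mpr (by linarith)
      have he : Real.exp (-1) < 1 / 2 := by
        rw [Real.exp_neg]
        rw [inv_lt_iff_one_lt_mul₀ (Real.exp_pos 1)]
        nlinarith [Real.exp_one_gt_d9]
      linarith
    have hE0 : 0 < E := Real.exp_pos _
    -- sum bound
    have hsum1 : Summable fun k : ℕ =>
        Real.exp (-(Real.pi * (Real.pi * t / d ^ 2)⁻¹ * ((k : ℝ) + 1) ^ 2)) :=
      summable_exp_sq (by positivity)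
    have hsum2 : Summable fun k : ℕ => E * E ^ k :=
      (summable_geometric_of_lt_one hE0.le (by linarith)).mul_left E
    have hterm : ∀ k : ℕ,
        Real.exp (-(Real.pi * (Real.pi * t / d ^ 2)⁻¹ * ((k : ℝ) + 1) ^ 2)) ≤ E * E ^ k := by
      intro k
      have : E * E ^ k = Real.exp (-(d ^ 2 / t * ((k : ℝ) + 1))) := by
        rw [hE, ← Real.exp_nat_mul, ← Real.exp_add]
        ring_nf
      rw [this, hβ]
      apply Real.exp_le_exp.mpr
      have hk0 : (0 : ℝ) ≤ (k : ℝ) := Nat.cast_nonneg k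
      have hdt : 0 < d ^ 2 / t := by positivity
      nlinarith [mul_nonneg (mul_nonneg hdt.le hk0) (by linarith : (0:ℝ) ≤ (k:ℝ)+1)]
    have hT : (∑' k : ℕ, Real.exp (-(Real.pi * (Real.pi * t / d ^ 2)⁻¹ * ((k : ℝ) + 1) ^ 2)))
        ≤ 2 * E := by
      have h1 := Summable.tsum_le_tsum hterm hsum1 hsum2
      have h2 : (∑' k : ℕ, E * E ^ k) = E * (1 - E)⁻¹ := by
        rw [tsum_mul_left, tsum_geometric_of_lt_one hE0.le (by linarith)]
      have h3 : E * (1 - E)⁻¹ ≤ 2 * E := by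
        rw [mul_inv_le_iff₀ (by linarith)]
        nlinarith
      calc _ ≤ E * (1-E)⁻¹ := h2 ▸ h1
        _ ≤ 2 * E := h3
    -- final comparison
    unfold thetaRem
    have hrw : 2 * d / Real.sqrt Real.pi * ((t⁻¹) ^ ((3:ℝ)/2) * Real.exp (-d ^ 2 * t⁻¹))
        = d / Real.sqrt (Real.pi * t) * (2 * E) / t := by
      have hts : Real.sqrt (Real.pi * t) = Real.sqrt Real.pi * Real.sqrt t :=
        Real.sqrt_mul Real.pi_pos.le t
      have h32 : (t⁻¹) ^ ((3:ℝ)/2) = (Real.sqrt t * t)⁻¹ := by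
        rw [Real.inv_rpow ht0.le, show (3:ℝ)/2 = 1 + 1/2 by norm_num,
          Real.rpow_add ht0, Real.rpow_one, ← Real.sqrt_eq_rpow]
        rw [mul_comm]
      have hEarg : Real.exp (-d ^ 2 * t⁻¹) = E := by
        rw [hE]; congr 1; field_simp
      rw [h32, hEarg, hts]
      have hst : 0 < Real.sqrt t := Real.sqrt_pos.mpr ht0
      have hsp : 0 < Real.sqrt Real.pi := Real.sqrt_pos.mpr Real.pi_pos
      field_simp
    rw [hrw]
    gcongr

/-- The remainder tends to `0`. -/
lemma r_lim {d : ℝ} (hd : 0 < d) :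
    Tendsto (fun t => thetaRem d t) (nhdsWithin 0 (Set.Ioi 0)) (nhds 0) := by
  have h1 : Tendsto (fun t : ℝ => thetaRem d t / t * t) (nhdsWithin 0 (Set.Ioi 0)) (nhds 0) := by
    have := (q_lim hd).mul (tendsto_id.mono_left nhdsWithin_le_nhds :
      Tendsto (fun t : ℝ => t) (nhdsWithin 0 (Set.Ioi 0)) (nhds 0))
    simpa using this
  refine h1.congr' ?_
  filter_upwards [self_mem_nhdsWithin] with t ht
  exact div_mul_cancel₀ _ (ne_of_gt ht)

/-- The `√t`-normalized `boxP` limit. -/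
lemma p_lim (d : ℝ) :
    Tendsto (fun t => Real.sqrt t * boxP d t) (nhdsWithin 0 (Set.Ioi 0))
      (nhds (d / (2 * Real.sqrt Real.pi))) := by
  have h : Tendsto (fun t : ℝ => d / (2 * Real.sqrt Real.pi) - Real.sqrt t / 2)
      (nhdsWithin 0 (Set.Ioi 0)) (nhds (d / (2 * Real.sqrt Real.pi) - 0)) := by
    refine tendsto_const_nhds.sub ?_
    have hs : Tendsto (fun t : ℝ => Real.sqrt t) (nhdsWithin 0 (Set.Ioi 0)) (nhds 0) :=
      (Real.continuous_sqrt.tendsto' 0 0 (by simp)).mono_left nhdsWithin_le_nhds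
    simpa using hs.div_const 2
  rw [sub_zero] at h
  refine h.congr' ?_
  filter_upwards [self_mem_nhdsWithin] with t ht
  have ht' : (0 : ℝ) < t := ht
  have hst : 0 < Real.sqrt t := Real.sqrt_pos.mpr ht'
  have hsp : 0 < Real.sqrt Real.pi := Real.sqrt_pos.mpr Real.pi_pos
  unfold boxP
  rw [Real.sqrt_mul Real.pi_pos.le]
  field_simp

lemma boxP_def (d t : ℝ) : boxP d t = d / (2 * Real.sqrt (Real.pi * t)) - 1 / 2 := rfl

/-- Short-time asymptotics of the Dirichlet partition function of the box
`(0,a) × (0,b) × (0,c)`: with eigenvalues `π²(k²/a² + l²/b² + m²/c²)`, `k, l, m ≥ 1`,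
`Z(t) − abc/(4πt)^{3/2} + (ab + bc + ac)/(8πt) − (a + b + c)/(8√(πt)) → −1/8`
as `t → 0⁺`. -/
theorem dirichlet_partition_box_short_time (a b c : ℝ) (ha : 0 < a) (hb : 0 < b)
    (hc : 0 < c) :
    Tendsto
      (fun t : ℝ =>
        (∑' k : ℕ, ∑' l : ℕ, ∑' m : ℕ,
            Real.exp (-(Real.pi ^ 2 *
              (((k : ℝ) + 1) ^ 2 / a ^ 2 + ((l : ℝ) + 1) ^ 2 / b ^ 2 +
                ((m : ℝ) + 1) ^ 2 / c ^ 2)) * t)) -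
          a * b * c / (4 * Real.pi * t) ^ ((3 : ℝ) / 2) +
          (a * b + b * c + a * c) / (8 * Real.pi * t) -
          (a + b + c) / (8 * Real.sqrt (Real.pi * t)))
      (nhdsWithin 0 (Set.Ioi 0)) (nhds (-(1 / 8))) := by
  -- factorization of the triple sum
  have hfac : ∀ t : ℝ,
      (∑' k : ℕ, ∑' l : ℕ, ∑' m : ℕ,
          Real.exp (-(Real.pi ^ 2 *
            (((k : ℝ) + 1) ^ 2 / a ^ 2 + ((l : ℝ) + 1) ^ 2 / b ^ 2 +
              ((m : ℝ) + 1) ^ 2 / c ^ 2)) * t))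
        = (∑' k : ℕ, Real.exp (-(Real.pi ^ 2 * (((k : ℝ) + 1) ^ 2 / a ^ 2)) * t)) *
          (∑' l : ℕ, Real.exp (-(Real.pi ^ 2 * (((l : ℝ) + 1) ^ 2 / b ^ 2)) * t)) *
          (∑' m : ℕ, Real.exp (-(Real.pi ^ 2 * (((m : ℝ) + 1) ^ 2 / c ^ 2)) * t)) := by
    intro t
    have e3 : ∀ k l : ℕ,
        (∑' m : ℕ, Real.exp (-(Real.pi ^ 2 *
            (((k : ℝ) + 1) ^ 2 / a ^ 2 + ((l : ℝ) + 1) ^ 2 / b ^ 2 +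
              ((m : ℝ) + 1) ^ 2 / c ^ 2)) * t))
          = Real.exp (-(Real.pi ^ 2 * (((k : ℝ) + 1) ^ 2 / a ^ 2)) * t) *
            Real.exp (-(Real.pi ^ 2 * (((l : ℝ) + 1) ^ 2 / b ^ 2)) * t) *
            (∑' m : ℕ, Real.exp (-(Real.pi ^ 2 * (((m : ℝ) + 1) ^ 2 / c ^ 2)) * t)) := by
      intro k l
      calc (∑' m : ℕ, Real.exp (-(Real.pi ^ 2 *
            (((k : ℝ) + 1) ^ 2 / a ^ 2 + ((l : ℝ) + 1) ^ 2 / b ^ 2 +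
              ((m : ℝ) + 1) ^ 2 / c ^ 2)) * t))
          = ∑' m : ℕ, (Real.exp (-(Real.pi ^ 2 * (((k : ℝ) + 1) ^ 2 / a ^ 2)) * t) *
              Real.exp (-(Real.pi ^ 2 * (((l : ℝ) + 1) ^ 2 / b ^ 2)) * t)) *
              Real.exp (-(Real.pi ^ 2 * (((m : ℝ) + 1) ^ 2 / c ^ 2)) * t) := by
            refine tsum_congr fun m => ?_
            rw [← Real.exp_add, ← Real.exp_add]
            congr 1
            ring
        _ = _ := tsum_mul_left
    have e2 : ∀ k : ℕ,
        (∑' l : ℕ, ∑' m : ℕ, Real.exp (-(Real.pi ^ 2 *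
            (((k : ℝ) + 1) ^ 2 / a ^ 2 + ((l : ℝ) + 1) ^ 2 / b ^ 2 +
              ((m : ℝ) + 1) ^ 2 / c ^ 2)) * t))
          = Real.exp (-(Real.pi ^ 2 * (((k : ℝ) + 1) ^ 2 / a ^ 2)) * t) *
            ((∑' l : ℕ, Real.exp (-(Real.pi ^ 2 * (((l : ℝ) + 1) ^ 2 / b ^ 2)) * t)) *
            (∑' m : ℕ, Real.exp (-(Real.pi ^ 2 * (((m : ℝ) + 1) ^ 2 / c ^ 2)) * t))) := by
      intro k
      calc (∑' l : ℕ, ∑' m : ℕ, Real.exp (-(Real.pi ^ 2 *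
            (((k : ℝ) + 1) ^ 2 / a ^ 2 + ((l : ℝ) + 1) ^ 2 / b ^ 2 +
              ((m : ℝ) + 1) ^ 2 / c ^ 2)) * t))
          = ∑' l : ℕ, (Real.exp (-(Real.pi ^ 2 * (((k : ℝ) + 1) ^ 2 / a ^ 2)) * t) *
              (∑' m : ℕ, Real.exp (-(Real.pi ^ 2 * (((m : ℝ) + 1) ^ 2 / c ^ 2)) * t))) *
              Real.exp (-(Real.pi ^ 2 * (((l : ℝ) + 1) ^ 2 / b ^ 2)) * t) := by
            refine tsum_congr fun l => ?_
            rw [e3 k l]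
            ring
        _ = _ := by rw [tsum_mul_left]; ring
    calc (∑' k : ℕ, ∑' l : ℕ, ∑' m : ℕ, Real.exp (-(Real.pi ^ 2 *
            (((k : ℝ) + 1) ^ 2 / a ^ 2 + ((l : ℝ) + 1) ^ 2 / b ^ 2 +
              ((m : ℝ) + 1) ^ 2 / c ^ 2)) * t))
        = ∑' k : ℕ, Real.exp (-(Real.pi ^ 2 * (((k : ℝ) + 1) ^ 2 / a ^ 2)) * t) *
            ((∑' l : ℕ, Real.exp (-(Real.pi ^ 2 * (((l : ℝ) + 1) ^ 2 / b ^ 2)) * t)) *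
             (∑' m : ℕ, Real.exp (-(Real.pi ^ 2 * (((m : ℝ) + 1) ^ 2 / c ^ 2)) * t))) :=
          tsum_congr e2
      _ = _ := by rw [tsum_mul_right]; ring
  -- the factored limit function
  set F : ℝ → ℝ := fun t =>
    (thetaRem a t / t) * (Real.sqrt t * boxP b t) * (Real.sqrt t * boxP c t)
    + (Real.sqrt t * boxP a t) * (thetaRem b t / t) * (Real.sqrt t * boxP c t)
    + (Real.sqrt t * boxP a t) * (Real.sqrt t * boxP b t) * (thetaRem c t / t)
    + thetaRem a t * (thetaRem b t / t) * (Real.sqrt t * (Real.sqrt t * boxP c t))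
    + thetaRem a t * (thetaRem c t / t) * (Real.sqrt t * (Real.sqrt t * boxP b t))
    + thetaRem b t * (thetaRem c t / t) * (Real.sqrt t * (Real.sqrt t * boxP a t))
    + thetaRem a t * thetaRem b t * thetaRem c t
    - 1 / 8 with hF
  have hsqrt0 : Tendsto (fun t : ℝ => Real.sqrt t) (nhdsWithin 0 (Set.Ioi 0)) (nhds 0) :=
    (Real.continuous_sqrt.tendsto' 0 0 (by simp)).mono_left nhdsWithin_le_nhds
  have hFlim : Tendsto F (nhdsWithin 0 (Set.Ioi 0)) (nhds (-(1 / 8))) := by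
    rw [hF]
    have h1 := ((q_lim ha).mul (p_lim b)).mul (p_lim c)
    have h2 := (((p_lim a).mul (q_lim hb)).mul (p_lim c))
    have h3 := (((p_lim a).mul (p_lim b)).mul (q_lim hc))
    have h4 := ((r_lim ha).mul (q_lim hb)).mul (hsqrt0.mul (p_lim c))
    have h5 := ((r_lim ha).mul (q_lim hc)).mul (hsqrt0.mul (p_lim b))
    have h6 := ((r_lim hb).mul (q_lim hc)).mul (hsqrt0.mul (p_lim a))
    have h7 := ((r_lim ha).mul (r_lim hb)).mul (r_lim hc)
    have hsum := ((((((h1.add h2).add h3).add h4).add h5).add h6).add h7).sub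
      (tendsto_const_nhds (x := (1:ℝ)/8))
    convert hsum using 2 <;> ring
  refine hFlim.congr' ?_
  filter_upwards [self_mem_nhdsWithin] with t ht
  have ht' : (0 : ℝ) < t := ht
  have hπt : (0 : ℝ) < Real.pi * t := by positivity
  have hw : 0 < Real.sqrt (Real.pi * t) := Real.sqrt_pos.mpr hπt
  have hs : 0 < Real.sqrt t := Real.sqrt_pos.mpr ht'
  have h32 : (4 * Real.pi * t) ^ ((3:ℝ)/2) = (2 * Real.sqrt (Real.pi * t)) ^ 3 := by
    have hx : (0:ℝ) ≤ 4 * Real.pi * t := by positivity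
    rw [show (3:ℝ)/2 = (1/2) * 3 by norm_num, Real.rpow_mul hx,
      show ((3:ℝ)) = ((3:ℕ):ℝ) by norm_num, Real.rpow_natCast, ← Real.sqrt_eq_rpow,
      show 4 * Real.pi * t = 4 * (Real.pi * t) by ring,
      Real.sqrt_mul (by norm_num : (0:ℝ) ≤ 4),
      show Real.sqrt 4 = 2 by
        rw [show (4:ℝ) = 2 ^ 2 by norm_num, Real.sqrt_sq (by norm_num : (0:ℝ) ≤ 2)]]
  have h8 : 8 * Real.pi * t = 8 * Real.sqrt (Real.pi * t) ^ 2 := by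
    rw [Real.sq_sqrt hπt.le]; ring
  simp only [hF]
  rw [hfac t, Sd_eq ha ht', Sd_eq hb ht', Sd_eq hc ht', h32, h8,
    boxP_def a t, boxP_def b t, boxP_def c t]
  have hst : Real.sqrt t ^ 2 = t := Real.sq_sqrt ht'.le
  set w := Real.sqrt (Real.pi * t)
  set s := Real.sqrt t
  rw [← hst]
  field_simp
  ring
end

section
/- Let L > 0. Then lim_{t→0⁺} (6/(4πt)) [ ∫₀^{L/4} ∫₀^{√3 x} exp(−3(x² + y²)/(4t)) dy dx + ∫_{L/4}^{L/2} ∫₀^{(L−x)/√3} exp(−3(x² + y²)/(4t)) dy dx ] = 1/3. This is the total contribution of the two nontrivial rotations R_{a₂}·R_{a₁} and (R_{a₂}·R_{a₁})² of the dihedral group Dih₆ to the short-time partition function of the equilateral triangle of side length L, summed over its three congruent subdomains. -/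
/-!
The subdomain `D₁` lies between the two triangles `0 < y < √3 x`, `0 < x < R`, with `R = L/4`
and `R = L/2`. For such a triangle with slope `m`, the substitution `y = s x` followed by the
radial integral in `x` gives
`2c ∫∫ exp (-c (x² + y²)) = arctan m - ∫₀^m exp (-c R² (1 + s²)) / (1 + s²) ds`,
and the last integral vanishes as `c → ∞`. With `c = 3/(4t)` the prefactor `6/(4πt)` is `2c/π`,
so both bounds tend to `arctan √3 / π = 1/3`.
-/

open Real Filter MeasureTheory Set intervalIntegral Topology
open scoped Interval

theorem intervalIntegral_mul_exp_neg_mul_sq {k : ℝ} (hk : k ≠ 0) (R : ℝ) :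
    ∫ x in (0:ℝ)..R, x * exp (-(k * x ^ 2)) = (1 - exp (-(k * R ^ 2))) / (2 * k) := by
  have hderiv : ∀ x ∈ uIcc (0:ℝ) R,
      HasDerivAt (fun x ↦ -exp (-(k * x ^ 2)) / (2 * k)) (x * exp (-(k * x ^ 2))) x := by
    intro x _
    refine (((hasDerivAt_pow 2 x).const_mul k).fun_neg.exp.fun_neg.div_const (2 * k)).congr_deriv ?_
    field_simp
    ring
  rw [integral_eq_sub_of_hasDerivAt hderiv (by apply Continuous.intervalIntegrable; fun_prop),
    zero_pow two_ne_zero, mul_zero, neg_zero, exp_zero]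
  ring

noncomputable def sectorIntegral (f : ℝ → ℝ → ℝ) (m R : ℝ) : ℝ :=
  ∫ x in (0:ℝ)..R, ∫ y in (0:ℝ)..(m * x), f x y

/-- The integral of `f` over the subdomain `D₁` adjacent to the vertex `A`. -/
noncomputable def quadrilateralIntegral (f : ℝ → ℝ → ℝ) (L : ℝ) : ℝ :=
  sectorIntegral f √3 (L / 4) + ∫ x in (L / 4)..(L / 2), ∫ y in (0:ℝ)..((L - x) / √3), f x y

theorem sectorIntegral_eq_integral_slope {f : ℝ → ℝ → ℝ} (hf : Continuous f.uncurry) (m R : ℝ) :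
    sectorIntegral f m R = ∫ s in (0:ℝ)..m, ∫ x in (0:ℝ)..R, x * f x (s * x) := by
  have hsubst : ∀ x, ∫ y in (0:ℝ)..(m * x), f x y = ∫ s in (0:ℝ)..m, x * f x (s * x) := by
    intro x
    have hscale := smul_integral_comp_mul_right (a := 0) (b := m) (f x) x
    rw [zero_mul, smul_eq_mul] at hscale
    rw [intervalIntegral.integral_const_mul, hscale]
  simp_rw [sectorIntegral, hsubst]
  refine intervalIntegral_intervalIntegral_swap ?_
  refine ContinuousOn.integrableOn_compact (isCompact_uIcc.prod isCompact_uIcc) ?_ |>.mono_set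
    (prod_mono uIoc_subset_uIcc uIoc_subset_uIcc)
  exact Continuous.continuousOn (by fun_prop)

theorem two_mul_sectorIntegral_gaussian {c : ℝ} (hc : c ≠ 0) (m R : ℝ) :
    2 * c * sectorIntegral (fun x y ↦ exp (-(c * (x ^ 2 + y ^ 2)))) m R =
      arctan m - ∫ s in (0:ℝ)..m, exp (-(c * R ^ 2 * (1 + s ^ 2))) / (1 + s ^ 2) := by
  have hradial : ∀ s : ℝ, 2 * c * ∫ x in (0:ℝ)..R, x * exp (-(c * (x ^ 2 + (s * x) ^ 2))) =
      1 / (1 + s ^ 2) - exp (-(c * R ^ 2 * (1 + s ^ 2))) / (1 + s ^ 2) := by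
    intro s
    have hk : c * (1 + s ^ 2) ≠ 0 := mul_ne_zero hc (by positivity)
    have hpoly : ∀ x : ℝ, c * (x ^ 2 + (s * x) ^ 2) = c * (1 + s ^ 2) * x ^ 2 := fun x ↦ by ring
    simp_rw [hpoly, intervalIntegral_mul_exp_neg_mul_sq hk R]
    field_simp
  rw [sectorIntegral_eq_integral_slope (by fun_prop), ← intervalIntegral.integral_const_mul]
  simp_rw [hradial]
  rw [intervalIntegral.integral_sub, integral_one_div_one_add_sq, arctan_zero, sub_zero]
  all_goals exact Continuous.intervalIntegrable (by fun_prop (disch := intro; positivity)) _ _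

theorem tendsto_integral_exp_neg_mul_div_one_add_sq (a b : ℝ) :
    Tendsto (fun c : ℝ ↦ ∫ s in a..b, exp (-(c * (1 + s ^ 2))) / (1 + s ^ 2)) atTop (𝓝 0) := by
  have hlim : ∀ s : ℝ, Tendsto (fun c : ℝ ↦ exp (-(c * (1 + s ^ 2))) / (1 + s ^ 2)) atTop (𝓝 0) :=
    fun s ↦ by simpa using ((tendsto_exp_atBot.comp (tendsto_neg_atTop_atBot.comp
      (tendsto_id.atTop_mul_const (by positivity : (0:ℝ) < 1 + s ^ 2)))).div_const (1 + s ^ 2))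
  have hbound : ∀ᶠ c : ℝ in atTop, ∀ᵐ s, s ∈ Ι a b →
      ‖exp (-(c * (1 + s ^ 2))) / (1 + s ^ 2)‖ ≤ 1 := by
    filter_upwards [eventually_ge_atTop 0] with c hc
    refine ae_of_all _ fun s _ ↦ ?_
    rw [norm_of_nonneg (by positivity)]
    refine div_le_one_of_le₀ ?_ (by positivity)
    calc exp (-(c * (1 + s ^ 2))) ≤ 1 := exp_le_one_iff.2 (neg_nonpos.2 (by positivity))
      _ ≤ 1 + s ^ 2 := le_add_of_nonneg_right (sq_nonneg s)
  simpa using tendsto_integral_filter_of_dominated_convergence (fun _ ↦ 1)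
    (Eventually.of_forall fun c ↦ (Continuous.aestronglyMeasurable
      (by fun_prop (disch := intro; positivity))))
    hbound intervalIntegrable_const (ae_of_all _ fun s _ ↦ hlim s)

theorem tendsto_two_mul_sectorIntegral_gaussian {R : ℝ} (hR : R ≠ 0) (m : ℝ) :
    Tendsto (fun c ↦ 2 * c * sectorIntegral (fun x y ↦ exp (-(c * (x ^ 2 + y ^ 2)))) m R)
      atTop (𝓝 (arctan m)) := by
  have hdefect := (tendsto_integral_exp_neg_mul_div_one_add_sq 0 m).comp
    (tendsto_id.atTop_mul_const (by positivity : 0 < R ^ 2))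
  rw [← sub_zero (arctan m)]
  refine (tendsto_const_nhds.sub hdefect).congr' ?_
  filter_upwards [eventually_ne_atTop 0] with c hc
  rw [two_mul_sectorIntegral_gaussian hc]
  rfl

theorem sectorIntegral_le_quadrilateralIntegral {f : ℝ → ℝ → ℝ} (hf : ∀ x y, 0 ≤ f x y)
    {L : ℝ} (hL : 0 ≤ L) : sectorIntegral f √3 (L / 4) ≤ quadrilateralIntegral f L :=
  le_add_of_nonneg_right <| integral_nonneg (by linarith) fun x hx ↦
    integral_nonneg (div_nonneg (by linarith [hx.2]) (sqrt_nonneg 3)) fun y _ ↦ hf x y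

theorem quadrilateralIntegral_le_sectorIntegral {f : ℝ → ℝ → ℝ} (hf : Continuous f.uncurry)
    (hf₀ : ∀ x y, 0 ≤ f x y) {L : ℝ} (hL : 0 ≤ L) :
    quadrilateralIntegral f L ≤ sectorIntegral f √3 (L / 2) := by
  have hinner : ∀ g : ℝ → ℝ, Continuous g →
      IntervalIntegrable (fun x ↦ ∫ y in (0:ℝ)..g x, f x y) volume (L / 4) (L / 2) :=
    fun _ hg ↦ (continuous_parametric_intervalIntegral_of_continuous hf hg).intervalIntegrable _ _
  have hsplit : sectorIntegral f √3 (L / 2) =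
      sectorIntegral f √3 (L / 4) + ∫ x in (L / 4)..(L / 2), ∫ y in (0:ℝ)..(√3 * x), f x y :=
    (integral_add_adjacent_intervals
      ((continuous_parametric_intervalIntegral_of_continuous hf (by fun_prop)).intervalIntegrable _ _)
      (hinner (√3 * ·) (by fun_prop))).symm
  rw [hsplit, quadrilateralIntegral]
  refine add_le_add le_rfl (integral_mono_on (by linarith)
    (hinner (fun x ↦ (L - x) / √3) (by fun_prop)) (hinner (√3 * ·) (by fun_prop)) fun x hx ↦ ?_)
  -- the side `y = (L - x)/√3` of `D₁` meets the ray `y = √3 x` at `x = L/4`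
  have hcut : (L - x) / √3 ≤ √3 * x := by
    rw [div_le_iff₀ (by positivity), mul_assoc, mul_comm x, ← mul_assoc,
      mul_self_sqrt (by norm_num : (0:ℝ) ≤ 3)]
    linarith [hx.1]
  exact integral_mono_interval le_rfl (div_nonneg (by linarith [hx.2]) (sqrt_nonneg 3)) hcut
    (ae_of_all _ fun y ↦ hf₀ x y) ((hf.uncurry_left x).intervalIntegrable _ _)

theorem tendsto_heatKernel_sectorIntegral {R : ℝ} (hR : R ≠ 0) :
    Tendsto (fun t : ℝ ↦ 6 / (4 * π * t) *
        sectorIntegral (fun x y ↦ exp (-(3 * (x ^ 2 + y ^ 2)) / (4 * t))) √3 R)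
      (𝓝[>] 0) (𝓝 (1 / 3)) := by
  have hc : Tendsto (fun t : ℝ ↦ 3 / (4 * t)) (𝓝[>] 0) atTop :=
    (tendsto_inv_nhdsGT_zero.const_mul_atTop (by norm_num : (0:ℝ) < 3 / 4)).congr fun t ↦ by ring
  have hlim := ((tendsto_two_mul_sectorIntegral_gaussian hR √3).comp hc).const_mul π⁻¹
  rw [arctan_sqrt_three, inv_mul_eq_div, div_div_cancel_left' pi_ne_zero, ← one_div (3:ℝ)] at hlim
  refine hlim.congr fun t ↦ ?_
  have hexponent : (fun x y : ℝ ↦ exp (-(3 / (4 * t) * (x ^ 2 + y ^ 2)))) =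
      fun x y ↦ exp (-(3 * (x ^ 2 + y ^ 2)) / (4 * t)) := by
    ext
    ring_nf
  simp only [Function.comp_apply, hexponent]
  ring

/-- The total contribution of the two nontrivial rotations of `Dih₆` to the short-time
partition function of the equilateral triangle of side `L`, summed over its three
congruent subdomains:
`lim_{t→0⁺} (6/(4πt)) [∫₀^{L/4}∫₀^{√3 x} e^{−3(x²+y²)/(4t)} dy dx
  + ∫_{L/4}^{L/2}∫₀^{(L−x)/√3} e^{−3(x²+y²)/(4t)} dy dx] = 1/3`. -/
theorem equilateral_rotation_contribution (L : ℝ) (hL : 0 < L) :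
    Tendsto
      (fun t : ℝ =>
        (6 / (4 * Real.pi * t)) *
          ((∫ x in (0:ℝ)..(L / 4), ∫ y in (0:ℝ)..(Real.sqrt 3 * x),
              Real.exp (-(3 * (x ^ 2 + y ^ 2)) / (4 * t))) +
            ∫ x in (L / 4)..(L / 2), ∫ y in (0:ℝ)..((L - x) / Real.sqrt 3),
              Real.exp (-(3 * (x ^ 2 + y ^ 2)) / (4 * t))))
      (nhdsWithin 0 (Set.Ioi 0)) (nhds (1 / 3)) := by
  refine tendsto_of_tendsto_of_tendsto_of_le_of_le'
    (tendsto_heatKernel_sectorIntegral (R := L / 4) (by positivity))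
    (tendsto_heatKernel_sectorIntegral (R := L / 2) (by positivity)) ?_ ?_ <;>
  filter_upwards [self_mem_nhdsWithin] with t (ht : 0 < t) <;>
  refine mul_le_mul_of_nonneg_left ?_ (by positivity)
  · exact sectorIntegral_le_quadrilateralIntegral (fun _ _ ↦ (exp_pos _).le) hL.le
  · exact quadrilateralIntegral_le_sectorIntegral (by fun_prop) (fun _ _ ↦ (exp_pos _).le) hL.le
end

section
/- Let L > 0 and define, for t > 0, P_t^{refl}(x, y) = −(1/(4πt)) ( exp(−(√3 x − y)²/(4t)) + exp(−y²/t) + exp(−(√3 x + y)²/(4t)) ). Then lim_{t→0⁺} √(π t) · 3 [ ∫₀^{L/4} ∫₀^{√3 x} P_t^{refl}(x, y) dy dx + ∫_{L/4}^{L/2} ∫₀^{(L−x)/√3} P_t^{refl}(x, y) dy dx ] = −(3L)/8. That is, the contribution of the three reflection elements R_{a₁}, R_{a₂}, R_{a₁}·R_{a₂}·R_{a₁} of Dih₆ to the short-time partition function of the equilateral triangle of side length L behaves like −|∂Ω|/(8√(πt)) with |∂Ω| = 3L. -/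
/-!
After the substitution `y ↦ y - m`, each of the three exponentials in `P_t^{refl}` is a Gaussian
of width `√t` centred at `m = √3 x`, `0` or `-√3 x`, and
`(√t)⁻¹ ∫₀^b exp (-(y - m)² / (c t)) dy → √(π c) / 2 · (sign (b - m) + sign m)`:
the full Gaussian mass when `m` lies inside `(0, b)`, half of it at an endpoint, nothing outside.
On the piece `0 < x < L/4` the centres `√3 x` and `0` are the endpoints of `[0, √3 x]`, which
gives `-9/8` per unit of `x`; on `L/4 < x < L/2` only `y = 0` contributes, giving `-3/8`.
The scaled inner integrals are bounded by `15/4`, so dominated convergence in `x` yields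
`L/4 · (-9/8 - 3/8) = -3L/8`.
-/

open Real Filter MeasureTheory Topology Interval

lemma integral_exp_neg_sq_odd (M : ℝ) :
    ∫ v in (0:ℝ)..-M, exp (-v ^ 2) = -∫ v in (0:ℝ)..M, exp (-v ^ 2) := by
  have := intervalIntegral.integral_comp_neg (a := 0) (b := M) (fun v : ℝ => exp (-v ^ 2))
  simp only [neg_sq, neg_zero] at this
  rw [intervalIntegral.integral_symm, ← this]

lemma tendsto_integral_exp_neg_sq_atTop :
    Tendsto (fun M => ∫ v in (0:ℝ)..M, exp (-v ^ 2)) atTop (𝓝 (√π / 2)) := by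
  have h := intervalIntegral_tendsto_integral_Ioi 0
    ((integrable_exp_neg_mul_sq one_pos).integrableOn (s := Set.Ioi 0)) tendsto_id
  have hI : ∫ v in Set.Ioi (0:ℝ), exp (-v ^ 2) = √π / 2 := by
    simpa using integral_gaussian_Ioi 1
  simpa [hI] using h

lemma tendsto_integral_exp_neg_sq_mul_atTop (a : ℝ) :
    Tendsto (fun s => ∫ v in (0:ℝ)..a * s, exp (-v ^ 2)) atTop (𝓝 (√π / 2 * Real.sign a)) := by
  rcases lt_trichotomy a 0 with ha | rfl | ha
  · have h := (tendsto_integral_exp_neg_sq_atTop.comp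
      (tendsto_id.const_mul_atTop (neg_pos.2 ha))).neg
    simpa [Function.comp_def, Real.sign_of_neg ha, ← integral_exp_neg_sq_odd] using h
  · simp [Real.sign_zero]
  · simpa [Function.comp_def, Real.sign_of_pos ha] using
      tendsto_integral_exp_neg_sq_atTop.comp (tendsto_id.const_mul_atTop ha)

lemma tendsto_inv_sqrt_mul_integral_exp_neg_sq_div {c : ℝ} (hc : 0 < c) (a : ℝ) :
    Tendsto (fun t => (√t)⁻¹ * ∫ u in (0:ℝ)..a, exp (-u ^ 2 / (c * t))) (𝓝[>] 0)
      (𝓝 (√(π * c) / 2 * Real.sign a)) := by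
  have hscale : Tendsto (fun t => (√(c * t))⁻¹) (𝓝[>] 0) atTop := by
    refine tendsto_inv_nhdsGT_zero.comp ?_
    have h := ((continuous_const.mul continuous_id).sqrt.continuousWithinAt
      (s := Set.Ioi (0:ℝ)) (x := 0)).tendsto_nhdsWithin
      (t := Set.Ioi 0) fun t (ht : 0 < t) => sqrt_pos.2 (mul_pos hc ht)
    simpa using h
  have hlim := ((tendsto_integral_exp_neg_sq_mul_atTop a).comp hscale).const_mul √c
  rw [show √(π * c) / 2 * Real.sign a = √c * (√π / 2 * Real.sign a) by
    rw [sqrt_mul pi_pos.le]; ring]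
  refine hlim.congr' ?_
  filter_upwards [self_mem_nhdsWithin] with t (ht : 0 < t)
  have hct : 0 < √(c * t) := sqrt_pos.2 (mul_pos hc ht)
  have hk : ∀ u, exp (-u ^ 2 / (c * t)) = exp (-((√(c * t))⁻¹ * u) ^ 2) := by
    intro u
    rw [mul_pow, inv_pow, sq_sqrt (mul_pos hc ht).le, neg_div, div_eq_inv_mul]
  simp_rw [hk]
  rw [intervalIntegral.integral_comp_mul_left (fun v => exp (-v ^ 2)) (inv_ne_zero hct.ne')]
  simp only [Function.comp_apply, mul_zero, smul_eq_mul, inv_inv, sqrt_mul hc.le]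
  field_simp

lemma tendsto_inv_sqrt_mul_integral_exp_neg_sub_sq_div {c : ℝ} (hc : 0 < c) (m b : ℝ) :
    Tendsto (fun t => (√t)⁻¹ * ∫ y in (0:ℝ)..b, exp (-(y - m) ^ 2 / (c * t))) (𝓝[>] 0)
      (𝓝 (√(π * c) / 2 * (Real.sign (b - m) + Real.sign m))) := by
  have h := (tendsto_inv_sqrt_mul_integral_exp_neg_sq_div hc (b - m)).sub
    (tendsto_inv_sqrt_mul_integral_exp_neg_sq_div hc (-m))
  rw [Real.sign_neg, ← mul_sub, sub_neg_eq_add] at h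
  refine h.congr fun t => ?_
  rw [← mul_sub, intervalIntegral.integral_interval_sub_left
    ((by fun_prop : Continuous _).intervalIntegrable _ _)
    ((by fun_prop : Continuous _).intervalIntegrable _ _),
    intervalIntegral.integral_comp_sub_right (fun u => exp (-u ^ 2 / (c * t))), zero_sub]

lemma integral_exp_neg_sub_sq_div_le {k : ℝ} (hk : 0 < k) (m : ℝ) {a b : ℝ} (hab : a ≤ b) :
    ∫ y in a..b, exp (-(y - m) ^ 2 / k) ≤ √(π * k) := by
  have hk' : ∀ y, exp (-(y - m) ^ 2 / k) = exp (-k⁻¹ * (y - m) ^ 2) := fun y => by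
    rw [neg_div, div_eq_inv_mul, neg_mul]
  simp_rw [hk']
  have hint : Integrable fun y => exp (-k⁻¹ * (y - m) ^ 2) :=
    (integrable_exp_neg_mul_sq (inv_pos.2 hk)).comp_sub_right m
  calc ∫ y in a..b, exp (-k⁻¹ * (y - m) ^ 2)
      ≤ ∫ y, exp (-k⁻¹ * (y - m) ^ 2) := by
        rw [intervalIntegral.integral_of_le hab]
        exact setIntegral_le_integral hint (.of_forall fun _ => (exp_pos _).le)
    _ = √(π * k) := by
        rw [integral_sub_right_eq_self (fun y => exp (-k⁻¹ * y ^ 2)) m, integral_gaussian,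
          div_inv_eq_mul]

noncomputable def reflKernel (t x y : ℝ) : ℝ :=
  -(1 / (4 * π * t)) *
    (exp (-(√3 * x - y) ^ 2 / (4 * t)) + exp (-y ^ 2 / t) + exp (-(√3 * x + y) ^ 2 / (4 * t)))

lemma continuous_uncurry_reflKernel (t : ℝ) : Continuous (Function.uncurry (reflKernel t)) := by
  unfold reflKernel Function.uncurry; fun_prop

-- Each Gaussian is written in the shape of `tendsto_inv_sqrt_mul_integral_exp_neg_sub_sq_div`.
lemma sqrt_mul_integral_reflKernel_eq {t : ℝ} (ht : 0 < t) (x b : ℝ) :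
    √(π * t) * 3 * ∫ y in (0:ℝ)..b, reflKernel t x y =
      -(3 / (4 * √π)) *
        ((√t)⁻¹ * (∫ y in (0:ℝ)..b, exp (-(y - √3 * x) ^ 2 / (4 * t))) +
          (√t)⁻¹ * (∫ y in (0:ℝ)..b, exp (-(y - 0) ^ 2 / (1 * t))) +
          (√t)⁻¹ * ∫ y in (0:ℝ)..b, exp (-(y - -(√3 * x)) ^ 2 / (4 * t))) := by
  have hint : ∀ f : ℝ → ℝ, Continuous f → IntervalIntegrable f volume 0 b :=
    fun f hf => hf.intervalIntegrable _ _
  simp only [reflKernel, sub_zero, one_mul, sub_neg_eq_add]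
  rw [intervalIntegral.integral_const_mul, intervalIntegral.integral_add
      ((hint _ (by fun_prop)).add (hint _ (by fun_prop))) (hint _ (by fun_prop)),
    intervalIntegral.integral_add (hint _ (by fun_prop)) (hint _ (by fun_prop))]
  have hsym : ∀ y, (√3 * x - y) ^ 2 = (y - √3 * x) ^ 2 := fun y => by ring
  have hsymm : ∀ y, (√3 * x + y) ^ 2 = (y + √3 * x) ^ 2 := fun y => by ring
  simp_rw [hsym, hsymm]
  have hπ : √π ≠ 0 := (sqrt_pos.2 pi_pos).ne'
  have ht' : √t ≠ 0 := (sqrt_pos.2 ht).ne'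
  rw [sqrt_mul pi_pos.le]
  field_simp
  rw [sq_sqrt pi_pos.le, sq_sqrt ht.le]

lemma tendsto_sqrt_mul_integral_reflKernel (x b : ℝ) :
    Tendsto (fun t => √(π * t) * 3 * ∫ y in (0:ℝ)..b, reflKernel t x y) (𝓝[>] 0)
      (𝓝 (-(3 / 4) * (Real.sign (b - √3 * x) + Real.sign b / 2 + Real.sign (b + √3 * x)))) := by
  have hA := tendsto_inv_sqrt_mul_integral_exp_neg_sub_sq_div four_pos (√3 * x) b
  have hB := tendsto_inv_sqrt_mul_integral_exp_neg_sub_sq_div one_pos 0 b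
  have hC := tendsto_inv_sqrt_mul_integral_exp_neg_sub_sq_div four_pos (-(√3 * x)) b
  convert (((hA.add hB).add hC).const_mul (-(3 / (4 * √π)))).congr'
    (eventually_nhdsWithin_of_forall (s := Set.Ioi 0) fun t ht =>
      (sqrt_mul_integral_reflKernel_eq ht x b).symm)
    using 2
  have h4 : √(π * 4) = 2 * √π := by
    rw [sqrt_mul' _ zero_le_four, show (4:ℝ) = 2 ^ 2 by norm_num, sqrt_sq zero_le_two]; ring
  have hπ : √π ≠ 0 := (sqrt_pos.2 pi_pos).ne'
  rw [h4, mul_one, Real.sign_zero, Real.sign_neg, sub_zero, sub_neg_eq_add]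
  field_simp
  ring

lemma norm_sqrt_mul_integral_reflKernel_le {t : ℝ} (ht : 0 < t) (x : ℝ) {b : ℝ} (hb : 0 ≤ b) :
    ‖√(π * t) * 3 * ∫ y in (0:ℝ)..b, reflKernel t x y‖ ≤ 15 / 4 := by
  have hle : ∀ c m, 0 < c → ∫ y in (0:ℝ)..b, exp (-(y - m) ^ 2 / (c * t)) ≤ √c * √(π * t) :=
    fun c m hc => by
      convert integral_exp_neg_sub_sq_div_le (mul_pos hc ht) m hb using 1
      rw [mul_left_comm, sqrt_mul hc.le]
  have hnonneg : ∀ c m, 0 ≤ ∫ y in (0:ℝ)..b, exp (-(y - m) ^ 2 / (c * t)) :=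
    fun c m => intervalIntegral.integral_nonneg hb fun _ _ => (exp_pos _).le
  have h4 : √4 = 2 := by rw [show (4:ℝ) = 2 ^ 2 by norm_num, sqrt_sq zero_le_two]
  have hA := hle 4 (√3 * x) four_pos
  have hB := hle 1 0 one_pos
  have hC := hle 4 (-(√3 * x)) four_pos
  rw [h4] at hA hC
  rw [sqrt_one] at hB
  rw [sqrt_mul_integral_reflKernel_eq ht, ← mul_add, ← mul_add, norm_mul, norm_neg, norm_mul,
    norm_inv,
    Real.norm_of_nonneg (sqrt_nonneg t), Real.norm_of_nonneg (by positivity),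
    Real.norm_of_nonneg (by linarith [hnonneg 4 (√3 * x), hnonneg 1 0, hnonneg 4 (-(√3 * x))])]
  have hπ : 0 < √π := sqrt_pos.2 pi_pos
  have ht' : 0 < √t := sqrt_pos.2 ht
  rw [sqrt_mul pi_pos.le] at hA hB hC
  calc 3 / (4 * √π) * ((√t)⁻¹ * _) ≤ 3 / (4 * √π) * ((√t)⁻¹ * (5 * (√π * √t))) := by
        gcongr; linarith
    _ = 15 / 4 := by field_simp; ring

lemma tendsto_integral_sqrt_mul_integral_reflKernel {p q ℓ : ℝ} {b : ℝ → ℝ} (hb : Continuous b)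
    (hb0 : ∀ x ∈ Ι p q, 0 ≤ b x)
    (hℓ : ∀ x ∈ Ι p q, -(3 / 4) * (Real.sign (b x - √3 * x) + Real.sign (b x) / 2 +
      Real.sign (b x + √3 * x)) = ℓ) :
    Tendsto (fun t => ∫ x in p..q, √(π * t) * 3 * ∫ y in (0:ℝ)..b x, reflKernel t x y)
      (𝓝[>] 0) (𝓝 ((q - p) * ℓ)) := by
  have h := intervalIntegral.tendsto_integral_filter_of_dominated_convergence (μ := volume)
    (f := fun _ => ℓ) (fun _ => 15 / 4) ?_ ?_ intervalIntegrable_const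
    (ae_of_all _ fun x hx => hℓ x hx ▸ tendsto_sqrt_mul_integral_reflKernel x (b x))
  · simpa using h
  · refine .of_forall fun t => Continuous.aestronglyMeasurable ?_
    exact continuous_const.mul
      (intervalIntegral.continuous_parametric_intervalIntegral_of_continuous
        (continuous_uncurry_reflKernel t) hb)
  · filter_upwards [self_mem_nhdsWithin] with t ht
    exact ae_of_all _ fun x hx => norm_sqrt_mul_integral_reflKernel_le ht x (hb0 x hx)

/-- The contribution of the three reflection elements of `Dih₆` to the short-time
partition function of the equilateral triangle of side `L`: with
`P_t^{refl}(x,y) = −(1/(4πt))(e^{−(√3 x − y)²/(4t)} + e^{−y²/t} + e^{−(√3 x + y)²/(4t)})`,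
`lim_{t→0⁺} √(πt) · 3 [∫₀^{L/4}∫₀^{√3 x} P_t^{refl} dy dx
  + ∫_{L/4}^{L/2}∫₀^{(L−x)/√3} P_t^{refl} dy dx] = −3L/8`,
i.e. the contribution behaves like `−|∂Ω|/(8√(πt))` with `|∂Ω| = 3L`. -/
theorem equilateral_reflection_contribution (L : ℝ) (hL : 0 < L)
    (P : ℝ → ℝ → ℝ → ℝ)
    (hP : ∀ t x y, P t x y =
      -(1 / (4 * Real.pi * t)) *
        (Real.exp (-(Real.sqrt 3 * x - y) ^ 2 / (4 * t)) + Real.exp (-y ^ 2 / t) +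
          Real.exp (-(Real.sqrt 3 * x + y) ^ 2 / (4 * t)))) :
    Tendsto
      (fun t : ℝ =>
        Real.sqrt (Real.pi * t) * (3 *
          ((∫ x in (0:ℝ)..(L / 4), ∫ y in (0:ℝ)..(Real.sqrt 3 * x), P t x y) +
            ∫ x in (L / 4)..(L / 2), ∫ y in (0:ℝ)..((L - x) / Real.sqrt 3), P t x y)))
      (nhdsWithin 0 (Set.Ioi 0)) (nhds (-(3 * L) / 8)) := by
  obtain rfl : P = reflKernel := funext fun t => funext fun x => funext fun y => hP t x y
  have h3 : 0 < √3 := by positivity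
  have hcorner : Tendsto (fun t => ∫ x in (0:ℝ)..(L / 4),
      √(π * t) * 3 * ∫ y in (0:ℝ)..(√3 * x), reflKernel t x y) (𝓝[>] 0)
      (𝓝 ((L / 4 - 0) * -(9 / 8))) := by
    refine tendsto_integral_sqrt_mul_integral_reflKernel (by fun_prop) ?_ ?_ <;>
      intro x hx <;> rw [Set.uIoc_of_le (by positivity)] at hx
    · exact mul_nonneg h3.le hx.1.le
    · rw [sub_self, Real.sign_zero, Real.sign_of_pos (by have := hx.1; positivity),
        Real.sign_of_pos (by have := hx.1; positivity)]
      norm_num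
  have hside : Tendsto (fun t => ∫ x in (L / 4)..(L / 2),
      √(π * t) * 3 * ∫ y in (0:ℝ)..((L - x) / √3), reflKernel t x y) (𝓝[>] 0)
      (𝓝 ((L / 2 - L / 4) * -(3 / 8))) := by
    refine tendsto_integral_sqrt_mul_integral_reflKernel (by fun_prop) ?_ ?_ <;>
      intro x hx <;> rw [Set.uIoc_of_le (by linarith)] at hx
    · exact div_nonneg (by linarith [hx.2]) h3.le
    · have hx0 : 0 < x := by linarith [hx.1]
      have hb : 0 < (L - x) / √3 := div_pos (by linarith [hx.2]) h3
      have hlt : (L - x) / √3 < √3 * x := by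
        rw [div_lt_iff₀ h3, mul_right_comm, mul_self_sqrt zero_le_three]; linarith [hx.1]
      rw [Real.sign_of_neg (sub_neg.2 hlt), Real.sign_of_pos hb,
        Real.sign_of_pos (by positivity)]
      norm_num
  convert hcorner.add hside using 2
  · rw [intervalIntegral.integral_const_mul, intervalIntegral.integral_const_mul]; ring
  · ring
end
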